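/- arXiv:1805.06393 — 6 statements merged into one kernel-verified Lean document; each statement's English description precedes it below -/
import Mathlib

section
/- Let σ : S → ℝ be smooth. The divergence of the rescaled vector field e^{σ(s)} X vanishes identically on S × ℝ^r (equivalently, the basic measure e^{σ(s)} ds^1⋯ds^r dp_1⋯dp_r is invariant under the reduced equations of motion) if and only if ∂σ/∂s^i(s) = − Σ_{j=1}^r C_{ij}^j(s) for every i = 1, …, r and every s ∈ S. -/
noncomputable section

/-- Partial derivative `∂f/∂s^i` of a function on phase space `(Fin r → ℝ) × (Fin r → ℝ)`. -/
def pdq (r : ℕ) (f : (Fin r → ℝ) × (Fin r → ℝ) → ℝ) (i : Fin r)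
    (x : (Fin r → ℝ) × (Fin r → ℝ)) : ℝ :=
  fderiv ℝ f x (Pi.single i 1, 0)

/-- Partial derivative `∂f/∂p_i` of a function on phase space. -/
def pdp (r : ℕ) (f : (Fin r → ℝ) × (Fin r → ℝ) → ℝ) (i : Fin r)
    (x : (Fin r → ℝ) × (Fin r → ℝ)) : ℝ :=
  fderiv ℝ f x (0, Pi.single i 1)

/-- Partial derivative `∂f/∂s^i` of a function on the shape space `Fin r → ℝ`. -/
def pdS (r : ℕ) (f : (Fin r → ℝ) → ℝ) (i : Fin r) (s : Fin r → ℝ) : ℝ :=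
  fderiv ℝ f s (Pi.single i 1)

/-- Divergence of a vector field on phase space:
`Σ_i ∂Y^{s_i}/∂s^i + Σ_i ∂Y^{p_i}/∂p_i`. -/
def divg (r : ℕ)
    (Y : (Fin r → ℝ) × (Fin r → ℝ) → (Fin r → ℝ) × (Fin r → ℝ))
    (x : (Fin r → ℝ) × (Fin r → ℝ)) : ℝ :=
  (∑ i, pdq r (fun y => (Y y).1 i) i x) + ∑ i, pdp r (fun y => (Y y).2 i) i x

variable {r : ℕ}

section Smooth

variable {S : Set (Fin r → ℝ)}

lemma contDiffOn_finprod {ι : Type} (t : Finset ι) (f : ι → (Fin r → ℝ) → ℝ)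
    (h : ∀ i ∈ t, ContDiffOn ℝ (⊤ : ℕ∞) (f i) S) : ContDiffOn ℝ (⊤ : ℕ∞) (fun s => ∏ i ∈ t, f i s) S := by
  classical
  induction t using Finset.induction with
  | empty => simpa using contDiffOn_const
  | insert a u hni ih =>
    simp only [Finset.prod_insert hni]
    exact (h a (Finset.mem_insert_self a u)).mul (ih fun i hi => h i (Finset.mem_insert_of_mem hi))

lemma contDiffOn_det (M : (Fin r → ℝ) → Matrix (Fin r) (Fin r) ℝ)
    (h : ∀ i j, ContDiffOn ℝ (⊤ : ℕ∞) (fun s => M s i j) S) :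
    ContDiffOn ℝ (⊤ : ℕ∞) (fun s => (M s).det) S := by
  simp only [Matrix.det_apply]
  refine ContDiffOn.sum fun σ _ => ?_
  simp only [Units.smul_def, zsmul_eq_mul]
  exact (contDiffOn_const).mul (contDiffOn_finprod _ _ fun i _ => h (σ i) i)

lemma contDiffOn_inv_entries (K : (Fin r → ℝ) → Matrix (Fin r) (Fin r) ℝ)
    (h : ∀ i j, ContDiffOn ℝ (⊤ : ℕ∞) (fun s => K s i j) S)
    (hpos : ∀ s ∈ S, (K s).PosDef) (i j : Fin r) :
    ContDiffOn ℝ (⊤ : ℕ∞) (fun s => (K s)⁻¹ i j) S := by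
  have hdet : ContDiffOn ℝ (⊤ : ℕ∞) (fun s => (K s).det) S := contDiffOn_det K h
  have hadj : ContDiffOn ℝ (⊤ : ℕ∞) (fun s => (K s).adjugate i j) S := by
    simp only [Matrix.adjugate_apply]
    refine contDiffOn_det _ fun a b => ?_
    simp only [Matrix.updateRow_apply]
    by_cases hab : a = j
    · simp only [hab, if_pos rfl]
      exact contDiffOn_const
    · simpa [hab] using h a b
  have hne : ∀ s ∈ S, (K s).det ≠ 0 := fun s hs => ne_of_gt (hpos s hs).det_pos
  have : ContDiffOn ℝ (⊤ : ℕ∞) (fun s => ((K s).det)⁻¹ * (K s).adjugate i j) S :=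
    (hdet.inv hne).mul hadj
  refine this.congr fun s hs => ?_
  rw [Matrix.inv_def]
  simp [Ring.inverse_eq_inv', Matrix.smul_apply, smul_eq_mul]

end Smooth

section PD

variable {x v : (Fin r → ℝ) × (Fin r → ℝ)}

lemma diffAt_fst' {f : (Fin r → ℝ) → ℝ} (hf : DifferentiableAt ℝ f x.1) :
    DifferentiableAt ℝ (fun y : (Fin r → ℝ) × (Fin r → ℝ) => f y.1) x :=
  hf.comp x differentiableAt_fst

lemma pd_fst' {f : (Fin r → ℝ) → ℝ} (hf : DifferentiableAt ℝ f x.1) (v) :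
    fderiv ℝ (fun y : (Fin r → ℝ) × (Fin r → ℝ) => f y.1) x v = fderiv ℝ f x.1 v.1 := by
  have h : fderiv ℝ (fun y : (Fin r → ℝ) × (Fin r → ℝ) => f y.1) x
      = (fderiv ℝ f x.1).comp (ContinuousLinearMap.fst ℝ _ _) :=
    (hf.hasFDerivAt.comp x hasFDerivAt_fst).fderiv
  rw [h]; rfl

lemma diffAt_coord (k : Fin r) (x : (Fin r → ℝ) × (Fin r → ℝ)) :
    DifferentiableAt ℝ (fun y : (Fin r → ℝ) × (Fin r → ℝ) => y.2 k) x :=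
  ((ContinuousLinearMap.proj k).comp
    (ContinuousLinearMap.snd ℝ (Fin r → ℝ) (Fin r → ℝ))).differentiableAt

lemma pd_coord (k : Fin r) (x v : (Fin r → ℝ) × (Fin r → ℝ)) :
    fderiv ℝ (fun y : (Fin r → ℝ) × (Fin r → ℝ) => y.2 k) x v = v.2 k := by
  have h : fderiv ℝ (fun y : (Fin r → ℝ) × (Fin r → ℝ) => y.2 k) x
      = ((ContinuousLinearMap.proj k).comp
          (ContinuousLinearMap.snd ℝ (Fin r → ℝ) (Fin r → ℝ))) :=
    (((ContinuousLinearMap.proj k).comp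
      (ContinuousLinearMap.snd ℝ (Fin r → ℝ) (Fin r → ℝ))).hasFDerivAt (x := x)).fderiv
  rw [h]; rfl

lemma pd_mul {f g : (Fin r → ℝ) × (Fin r → ℝ) → ℝ}
    (hf : DifferentiableAt ℝ f x) (hg : DifferentiableAt ℝ g x) (v) :
    fderiv ℝ (fun y => f y * g y) x v = f x * fderiv ℝ g x v + g x * fderiv ℝ f x v := by
  rw [fderiv_fun_mul hf hg]
  simp [smul_eq_mul]

lemma diff_lin (a : Fin r → (Fin r → ℝ) → ℝ) (ha : ∀ m, DifferentiableAt ℝ (a m) x.1) :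
    DifferentiableAt ℝ (fun y : (Fin r → ℝ) × (Fin r → ℝ) => ∑ m, a m y.1 * y.2 m) x :=
  DifferentiableAt.fun_sum fun m _ => (diffAt_fst' (ha m)).mul (diffAt_coord m x)

lemma pd_lin (a : Fin r → (Fin r → ℝ) → ℝ) (ha : ∀ m, DifferentiableAt ℝ (a m) x.1) (v) :
    fderiv ℝ (fun y : (Fin r → ℝ) × (Fin r → ℝ) => ∑ m, a m y.1 * y.2 m) x v
      = ∑ m, (fderiv ℝ (a m) x.1 v.1 * x.2 m + a m x.1 * v.2 m) := by
  rw [fderiv_fun_sum (fun m _ => (diffAt_fst' (ha m)).fun_mul (diffAt_coord m x)),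
    ContinuousLinearMap.sum_apply]
  refine Finset.sum_congr rfl fun m _ => ?_
  rw [pd_mul (diffAt_fst' (ha m)) (diffAt_coord m x), pd_fst' (ha m), pd_coord]
  ring

lemma diff_quad (a : Fin r → Fin r → (Fin r → ℝ) → ℝ) (u : (Fin r → ℝ) → ℝ)
    (ha : ∀ c d, DifferentiableAt ℝ (a c d) x.1) (hu : DifferentiableAt ℝ u x.1) :
    DifferentiableAt ℝ (fun y : (Fin r → ℝ) × (Fin r → ℝ) =>
      (1/2) * (∑ c, ∑ d, a c d y.1 * y.2 c * y.2 d) + u y.1) x := by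
  refine DifferentiableAt.add ?_ (diffAt_fst' hu)
  refine DifferentiableAt.const_mul ?_ _
  exact DifferentiableAt.fun_sum fun c _ => DifferentiableAt.fun_sum fun d _ =>
    ((diffAt_fst' (ha c d)).mul (diffAt_coord c x)).mul (diffAt_coord d x)

lemma pd_quad (a : Fin r → Fin r → (Fin r → ℝ) → ℝ) (u : (Fin r → ℝ) → ℝ)
    (ha : ∀ c d, DifferentiableAt ℝ (a c d) x.1) (hu : DifferentiableAt ℝ u x.1) (v) :
    fderiv ℝ (fun y : (Fin r → ℝ) × (Fin r → ℝ) =>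
        (1/2) * (∑ c, ∑ d, a c d y.1 * y.2 c * y.2 d) + u y.1) x v
      = (1/2) * (∑ c, ∑ d, (fderiv ℝ (a c d) x.1 v.1 * x.2 c * x.2 d
          + a c d x.1 * v.2 c * x.2 d + a c d x.1 * x.2 c * v.2 d)) + fderiv ℝ u x.1 v.1 := by
  have hterm : ∀ c d, DifferentiableAt ℝ
      (fun y : (Fin r → ℝ) × (Fin r → ℝ) => a c d y.1 * y.2 c * y.2 d) x :=
    fun c d => ((diffAt_fst' (ha c d)).mul (diffAt_coord c x)).mul (diffAt_coord d x)
  have hsum : DifferentiableAt ℝ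
      (fun y : (Fin r → ℝ) × (Fin r → ℝ) => ∑ c, ∑ d, a c d y.1 * y.2 c * y.2 d) x :=
    DifferentiableAt.fun_sum fun c _ => DifferentiableAt.fun_sum fun d _ => hterm c d
  rw [fderiv_fun_add (hsum.const_mul _) (diffAt_fst' hu), ContinuousLinearMap.add_apply,
    fderiv_const_mul hsum, ContinuousLinearMap.smul_apply, smul_eq_mul, pd_fst' hu]
  congr 2
  rw [fderiv_fun_sum (fun c _ => DifferentiableAt.fun_sum fun d _ => hterm c d),
    ContinuousLinearMap.sum_apply]
  refine Finset.sum_congr rfl fun c _ => ?_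
  rw [fderiv_fun_sum (fun d _ => hterm c d), ContinuousLinearMap.sum_apply]
  refine Finset.sum_congr rfl fun d _ => ?_
  rw [pd_mul ((diffAt_fst' (ha c d)).fun_mul (diffAt_coord c x)) (diffAt_coord d x),
    pd_mul (diffAt_fst' (ha c d)) (diffAt_coord c x), pd_fst' (ha c d), pd_coord, pd_coord]
  ring

lemma diff_gyro (b a : Fin r → Fin r → (Fin r → ℝ) → ℝ)
    (hb : ∀ c d, DifferentiableAt ℝ (b c d) x.1)
    (ha : ∀ c d, DifferentiableAt ℝ (a c d) x.1) :
    DifferentiableAt ℝ (fun y : (Fin r → ℝ) × (Fin r → ℝ) =>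
      ∑ j, ∑ k, b j k y.1 * y.2 k * (∑ m, a j m y.1 * y.2 m)) x :=
  DifferentiableAt.fun_sum fun j _ => DifferentiableAt.fun_sum fun k _ =>
    ((diffAt_fst' (hb j k)).mul (diffAt_coord k x)).mul (diff_lin (a j) (ha j))

lemma pd_gyro (b a : Fin r → Fin r → (Fin r → ℝ) → ℝ)
    (hb : ∀ c d, DifferentiableAt ℝ (b c d) x.1)
    (ha : ∀ c d, DifferentiableAt ℝ (a c d) x.1) (v) :
    fderiv ℝ (fun y : (Fin r → ℝ) × (Fin r → ℝ) =>
        ∑ j, ∑ k, b j k y.1 * y.2 k * (∑ m, a j m y.1 * y.2 m)) x v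
      = ∑ j, ∑ k, ((fderiv ℝ (b j k) x.1 v.1 * x.2 k + b j k x.1 * v.2 k)
            * (∑ m, a j m x.1 * x.2 m)
          + b j k x.1 * x.2 k
            * (∑ m, (fderiv ℝ (a j m) x.1 v.1 * x.2 m + a j m x.1 * v.2 m))) := by
  have hterm : ∀ j k, DifferentiableAt ℝ (fun y : (Fin r → ℝ) × (Fin r → ℝ) =>
      b j k y.1 * y.2 k * (∑ m, a j m y.1 * y.2 m)) x :=
    fun j k => ((diffAt_fst' (hb j k)).mul (diffAt_coord k x)).mul (diff_lin (a j) (ha j))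
  rw [fderiv_fun_sum (fun j _ => DifferentiableAt.fun_sum fun k _ => hterm j k),
    ContinuousLinearMap.sum_apply]
  refine Finset.sum_congr rfl fun j _ => ?_
  rw [fderiv_fun_sum (fun k _ => hterm j k), ContinuousLinearMap.sum_apply]
  refine Finset.sum_congr rfl fun k _ => ?_
  rw [pd_mul ((diffAt_fst' (hb j k)).fun_mul (diffAt_coord k x)) (diff_lin (a j) (ha j)),
    pd_mul (diffAt_fst' (hb j k)) (diffAt_coord k x), pd_fst' (hb j k), pd_coord,
    pd_lin (a j) (ha j)]
  ring

lemma diff_exp_mul (σ : (Fin r → ℝ) → ℝ) (w : (Fin r → ℝ) × (Fin r → ℝ) → ℝ)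
    (hσ : DifferentiableAt ℝ σ x.1) (hw : DifferentiableAt ℝ w x) :
    DifferentiableAt ℝ (fun y : (Fin r → ℝ) × (Fin r → ℝ) => Real.exp (σ y.1) * w y) x :=
  (diffAt_fst' hσ.exp).mul hw

lemma pd_exp_mul (σ : (Fin r → ℝ) → ℝ) (w : (Fin r → ℝ) × (Fin r → ℝ) → ℝ)
    (hσ : DifferentiableAt ℝ σ x.1) (hw : DifferentiableAt ℝ w x) (v) :
    fderiv ℝ (fun y : (Fin r → ℝ) × (Fin r → ℝ) => Real.exp (σ y.1) * w y) x v
      = Real.exp (σ x.1) * (fderiv ℝ σ x.1 v.1 * w x + fderiv ℝ w x v) := by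
  rw [pd_mul (diffAt_fst' hσ.exp) hw, pd_fst' hσ.exp]
  rw [fderiv_exp hσ, ContinuousLinearMap.smul_apply, smul_eq_mul]
  ring

end PD

section SPEC

variable {x : (Fin r → ℝ) × (Fin r → ℝ)}

lemma sum_single_mul (F : Fin r → ℝ) (i : Fin r) :
    ∑ c, (Pi.single i 1 : Fin r → ℝ) c * F c = F i := by
  simp [Pi.single_apply, ite_mul]

lemma sum_mul_single (F : Fin r → ℝ) (i : Fin r) :
    ∑ c, F c * (Pi.single i 1 : Fin r → ℝ) c = F i := by
  simp [Pi.single_apply, mul_ite]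

lemma pdp_lin' (a : Fin r → (Fin r → ℝ) → ℝ) (ha : ∀ m, DifferentiableAt ℝ (a m) x.1)
    (i : Fin r) :
    pdp r (fun y => ∑ m, a m y.1 * y.2 m) i x = a i x.1 := by
  unfold pdp
  rw [pd_lin a ha]
  simp only [map_zero, zero_mul, zero_add]
  exact sum_mul_single (fun m => a m x.1) i

lemma pdq_lin' (a : Fin r → (Fin r → ℝ) → ℝ) (ha : ∀ m, DifferentiableAt ℝ (a m) x.1)
    (i : Fin r) :
    pdq r (fun y => ∑ m, a m y.1 * y.2 m) i x
      = ∑ m, fderiv ℝ (a m) x.1 (Pi.single i 1) * x.2 m := by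
  unfold pdq
  rw [pd_lin a ha]
  simp

lemma pdp_quad' (a : Fin r → Fin r → (Fin r → ℝ) → ℝ) (u : (Fin r → ℝ) → ℝ)
    (ha : ∀ c d, DifferentiableAt ℝ (a c d) x.1) (hu : DifferentiableAt ℝ u x.1) (i : Fin r) :
    pdp r (fun y => (1/2) * (∑ c, ∑ d, a c d y.1 * y.2 c * y.2 d) + u y.1) i x
      = (1/2) * ((∑ d, a i d x.1 * x.2 d) + ∑ c, a c i x.1 * x.2 c) := by
  unfold pdp
  rw [pd_quad a u ha hu]
  simp only [map_zero, zero_mul, mul_zero, add_zero, zero_add, Finset.sum_add_distrib]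
  congr 2
  · rw [show (∑ c, ∑ d, a c d x.1 * (Pi.single i 1 : Fin r → ℝ) c * x.2 d)
        = ∑ c, (Pi.single i 1 : Fin r → ℝ) c * ∑ d, a c d x.1 * x.2 d from
      Finset.sum_congr rfl fun c _ => by
        rw [Finset.mul_sum]; exact Finset.sum_congr rfl fun d _ => by ring]
    exact sum_single_mul (fun c => ∑ d, a c d x.1 * x.2 d) i
  · exact Finset.sum_congr rfl fun c _ => sum_mul_single (fun d => a c d x.1 * x.2 c) i

lemma pdq_quad' (a : Fin r → Fin r → (Fin r → ℝ) → ℝ) (u : (Fin r → ℝ) → ℝ)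
    (ha : ∀ c d, DifferentiableAt ℝ (a c d) x.1) (hu : DifferentiableAt ℝ u x.1) (i : Fin r) :
    pdq r (fun y => (1/2) * (∑ c, ∑ d, a c d y.1 * y.2 c * y.2 d) + u y.1) i x
      = (1/2) * (∑ c, ∑ d, fderiv ℝ (a c d) x.1 (Pi.single i 1) * x.2 c * x.2 d)
        + fderiv ℝ u x.1 (Pi.single i 1) := by
  unfold pdq
  rw [pd_quad a u ha hu]
  simp

lemma pdp_gyro' (b a : Fin r → Fin r → (Fin r → ℝ) → ℝ)
    (hb : ∀ c d, DifferentiableAt ℝ (b c d) x.1)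
    (ha : ∀ c d, DifferentiableAt ℝ (a c d) x.1) (i : Fin r) :
    pdp r (fun y => ∑ j, ∑ k, b j k y.1 * y.2 k * (∑ m, a j m y.1 * y.2 m)) i x
      = (∑ j, b j i x.1 * (∑ m, a j m x.1 * x.2 m))
        + ∑ j, ∑ k, b j k x.1 * x.2 k * a j i x.1 := by
  unfold pdp
  rw [pd_gyro b a hb ha]
  simp only [map_zero, zero_mul, mul_zero, add_zero, zero_add]
  have hj : ∀ j, (∑ k, (b j k x.1 * (Pi.single i 1 : Fin r → ℝ) k * (∑ m, a j m x.1 * x.2 m)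
        + b j k x.1 * x.2 k * (∑ m, a j m x.1 * (Pi.single i 1 : Fin r → ℝ) m)))
      = b j i x.1 * (∑ m, a j m x.1 * x.2 m) + ∑ k, b j k x.1 * x.2 k * a j i x.1 := by
    intro j
    rw [Finset.sum_add_distrib]
    congr 1
    · rw [show (∑ k, b j k x.1 * (Pi.single i 1 : Fin r → ℝ) k * (∑ m, a j m x.1 * x.2 m))
          = (∑ k, b j k x.1 * (Pi.single i 1 : Fin r → ℝ) k) * (∑ m, a j m x.1 * x.2 m) from
        (Finset.sum_mul _ _ _).symm]
      rw [sum_mul_single (fun k => b j k x.1) i]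
    · exact Finset.sum_congr rfl fun k _ => by
        rw [sum_mul_single (fun m => a j m x.1) i]
  rw [show (∑ j, ∑ k, (b j k x.1 * (Pi.single i 1 : Fin r → ℝ) k * (∑ m, a j m x.1 * x.2 m)
        + b j k x.1 * x.2 k * (∑ m, a j m x.1 * (Pi.single i 1 : Fin r → ℝ) m)))
      = ∑ j, (b j i x.1 * (∑ m, a j m x.1 * x.2 m) + ∑ k, b j k x.1 * x.2 k * a j i x.1) from
    Finset.sum_congr rfl fun j _ => hj j]
  rw [Finset.sum_add_distrib]

lemma pdp_exp_mul' (σ : (Fin r → ℝ) → ℝ) (w : (Fin r → ℝ) × (Fin r → ℝ) → ℝ)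
    (hσ : DifferentiableAt ℝ σ x.1) (hw : DifferentiableAt ℝ w x) (i : Fin r) :
    pdp r (fun y => Real.exp (σ y.1) * w y) i x = Real.exp (σ x.1) * pdp r w i x := by
  unfold pdp
  rw [pd_exp_mul σ w hσ hw]
  show Real.exp (σ x.1) * (fderiv ℝ σ x.1 0 * w x + fderiv ℝ w x (0, Pi.single i 1)) = _
  rw [map_zero, zero_mul, zero_add]

lemma pdq_exp_mul' (σ : (Fin r → ℝ) → ℝ) (w : (Fin r → ℝ) × (Fin r → ℝ) → ℝ)
    (hσ : DifferentiableAt ℝ σ x.1) (hw : DifferentiableAt ℝ w x) (i : Fin r) :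
    pdq r (fun y => Real.exp (σ y.1) * w y) i x
      = Real.exp (σ x.1) * (fderiv ℝ σ x.1 (Pi.single i 1) * w x + pdq r w i x) := by
  unfold pdq
  rw [pd_exp_mul σ w hσ hw]

lemma pdp_neg_sub (f g : (Fin r → ℝ) × (Fin r → ℝ) → ℝ)
    (hf : DifferentiableAt ℝ f x) (hg : DifferentiableAt ℝ g x) (i : Fin r) :
    pdp r (fun y => -f y - g y) i x = -pdp r f i x - pdp r g i x := by
  unfold pdp
  rw [fderiv_fun_sub hf.fun_neg hg, ContinuousLinearMap.sub_apply, fderiv_fun_neg,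
    ContinuousLinearMap.neg_apply]

end SPEC

/-- the divergence of the rescaled vector field `e^{σ(s)} X` vanishes
identically on `S × ℝ^r` iff `∂σ/∂s^i = − Σ_j C_{ij}^j` on `S` for all `i`. -/
theorem invariant_measure_iff
    (r : ℕ) (hr : 2 ≤ r)
    (S : Set (Fin r → ℝ)) (hS : IsOpen S)
    (K : (Fin r → ℝ) → Matrix (Fin r) (Fin r) ℝ)
    (hKsmooth : ∀ i j, ContDiffOn ℝ (⊤ : ℕ∞) (fun s => K s i j) S)
    (hKsym : ∀ s ∈ S, (K s).IsSymm)
    (hKpos : ∀ s ∈ S, (K s).PosDef)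
    (U : (Fin r → ℝ) → ℝ) (hU : ContDiffOn ℝ (⊤ : ℕ∞) U S)
    (C : Fin r → Fin r → Fin r → (Fin r → ℝ) → ℝ)
    (hCsmooth : ∀ i j k, ContDiffOn ℝ (⊤ : ℕ∞) (C i j k) S)
    (hCskew : ∀ i j k s, C i j k s = - C j i k s)
    (σ : (Fin r → ℝ) → ℝ) (hσ : ContDiffOn ℝ (⊤ : ℕ∞) σ S)
    (H : (Fin r → ℝ) × (Fin r → ℝ) → ℝ)
    (hH : ∀ x, H x = (1/2) * (∑ i, ∑ j, (K x.1)⁻¹ i j * x.2 i * x.2 j) + U x.1)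
    (X : (Fin r → ℝ) × (Fin r → ℝ) → (Fin r → ℝ) × (Fin r → ℝ))
    (hX : ∀ x, X x =
      (fun i => pdp r H i x,
       fun i => - pdq r H i x - ∑ j, ∑ k, C i j k x.1 * x.2 k * pdp r H j x)) :
    (∀ x : (Fin r → ℝ) × (Fin r → ℝ), x.1 ∈ S →
        divg r (fun y => Real.exp (σ y.1) • X y) x = 0)
      ↔ (∀ i, ∀ s ∈ S, pdS r σ i s = - ∑ j, C i j j s) := by
  classical
  have hHfun : H = fun x : (Fin r → ℝ) × (Fin r → ℝ) =>
      (1/2) * (∑ i, ∑ j, (K x.1)⁻¹ i j * x.2 i * x.2 j) + U x.1 := funext hH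
  have hdiff : ∀ (f : (Fin r → ℝ) → ℝ), ContDiffOn ℝ (⊤ : ℕ∞) f S → ∀ {t : Fin r → ℝ}, t ∈ S →
      DifferentiableAt ℝ f t := fun f hf t ht =>
    (hf.contDiffAt (hS.mem_nhds ht)).differentiableAt (by simp)
  have hgsm : ∀ c d : Fin r, ContDiffOn ℝ (⊤ : ℕ∞) (fun t => (K t)⁻¹ c d) S :=
    fun c d => contDiffOn_inv_entries K hKsmooth hKpos c d
  have hgd : ∀ {t : Fin r → ℝ}, t ∈ S → ∀ c d : Fin r,
      DifferentiableAt ℝ (fun t' => (K t')⁻¹ c d) t :=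
    fun {t} ht c d => hdiff _ (hgsm c d) ht
  have hUd : ∀ {t : Fin r → ℝ}, t ∈ S → DifferentiableAt ℝ U t := fun {t} ht => hdiff _ hU ht
  have hσd : ∀ {t : Fin r → ℝ}, t ∈ S → DifferentiableAt ℝ σ t := fun {t} ht => hdiff _ hσ ht
  have hCd : ∀ (a b c : Fin r) {t : Fin r → ℝ}, t ∈ S → DifferentiableAt ℝ (C a b c) t :=
    fun a b c {t} ht => hdiff _ (hCsmooth a b c) ht
  have hDgsm : ∀ (i c d : Fin r),
      ContDiffOn ℝ (⊤ : ℕ∞) (fun t => pdS r (fun t' => (K t')⁻¹ c d) i t) S := fun i c d =>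
    ((ContinuousLinearMap.apply ℝ ℝ (Pi.single i 1 : Fin r → ℝ)).contDiff).comp_contDiffOn
      ((hgsm c d).fderiv_of_isOpen hS (by simp))
  have hDgd : ∀ {t : Fin r → ℝ}, t ∈ S → ∀ (i c d : Fin r),
      DifferentiableAt ℝ (fun t' => pdS r (fun t'' => (K t'')⁻¹ c d) i t') t :=
    fun {t} ht i c d => hdiff _ (hDgsm i c d) ht
  have hDUsm : ∀ i : Fin r, ContDiffOn ℝ (⊤ : ℕ∞) (fun t => pdS r U i t) S := fun i =>
    ((ContinuousLinearMap.apply ℝ ℝ (Pi.single i 1 : Fin r → ℝ)).contDiff).comp_contDiffOn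
      (hU.fderiv_of_isOpen hS (by simp))
  have hDUd : ∀ {t : Fin r → ℝ}, t ∈ S → ∀ i : Fin r,
      DifferentiableAt ℝ (fun t' => pdS r U i t') t :=
    fun {t} ht i => hdiff _ (hDUsm i) ht
  have hgsym : ∀ t ∈ S, ∀ c d : Fin r, (K t)⁻¹ c d = (K t)⁻¹ d c := by
    intro t ht c d
    have h1 : ((K t)⁻¹).transpose = (K t)⁻¹ := by
      rw [Matrix.transpose_nonsing_inv, (hKsym t ht).eq]
    calc (K t)⁻¹ c d = ((K t)⁻¹).transpose d c := (Matrix.transpose_apply _ d c).symm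
      _ = (K t)⁻¹ d c := by rw [h1]
  have hDgsym : ∀ t ∈ S, ∀ (i c d : Fin r),
      pdS r (fun t' => (K t')⁻¹ c d) i t = pdS r (fun t' => (K t')⁻¹ d c) i t := by
    intro t ht i c d
    unfold pdS
    congr 1
    apply Filter.EventuallyEq.fderiv_eq
    filter_upwards [hS.mem_nhds ht] with t' ht'
    exact hgsym t' ht' c d
  have hP : ∀ (y : (Fin r → ℝ) × (Fin r → ℝ)), y.1 ∈ S → ∀ j : Fin r,
      pdp r H j y = ∑ m, (K y.1)⁻¹ j m * y.2 m := by
    intro y hy j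
    rw [hHfun]
    refine Eq.trans
      (pdp_quad' (fun c d t => (K t)⁻¹ c d) U (fun c d => hgd hy c d) (hUd hy) j) ?_
    rw [show (∑ c, (K y.1)⁻¹ c j * y.2 c) = ∑ m, (K y.1)⁻¹ j m * y.2 m from
      Finset.sum_congr rfl fun c _ => by rw [hgsym y.1 hy c j]]
    ring
  have hQ : ∀ (y : (Fin r → ℝ) × (Fin r → ℝ)), y.1 ∈ S → ∀ i : Fin r,
      pdq r H i y = (1/2) * (∑ c, ∑ d, pdS r (fun t => (K t)⁻¹ c d) i y.1 * y.2 c * y.2 d)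
        + pdS r U i y.1 := by
    intro y hy i
    rw [hHfun]
    exact pdq_quad' (fun c d t => (K t)⁻¹ c d) U (fun c d => hgd hy c d) (hUd hy) i
  have main : ∀ x : (Fin r → ℝ) × (Fin r → ℝ), x.1 ∈ S →
      divg r (fun y => Real.exp (σ y.1) • X y) x
        = Real.exp (σ x.1) * ∑ j, ((pdS r σ j x.1 + ∑ i, C j i i x.1)
            * (∑ m, (K x.1)⁻¹ j m * x.2 m)) := by
    intro x hx
    have hnb : {y : (Fin r → ℝ) × (Fin r → ℝ) | y.1 ∈ S} ∈ nhds x :=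
      (hS.preimage continuous_fst).mem_nhds hx
    have hA : ∀ i : Fin r, pdq r (fun y => (Real.exp (σ y.1) • X y).1 i) i x
        = Real.exp (σ x.1) * (pdS r σ i x.1 * (∑ m, (K x.1)⁻¹ i m * x.2 m)
            + ∑ m, pdS r (fun t => (K t)⁻¹ i m) i x.1 * x.2 m) := by
      intro i
      have e1 : (fun y => (Real.exp (σ y.1) • X y).1 i)
          =ᶠ[nhds x] (fun y => Real.exp (σ y.1) * (∑ m, (K y.1)⁻¹ i m * y.2 m)) := by
        filter_upwards [hnb] with y hy
        simp only [hX, Prod.smul_mk, Pi.smul_apply, smul_eq_mul]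
        rw [hP y hy i]
      have e2 : pdq r (fun y => (Real.exp (σ y.1) • X y).1 i) i x
          = pdq r (fun y => Real.exp (σ y.1) * (∑ m, (K y.1)⁻¹ i m * y.2 m)) i x := by
        unfold pdq
        rw [e1.fderiv_eq]
      rw [e2]
      have e3 := pdq_exp_mul' (x := x) σ (fun y => ∑ m, (K y.1)⁻¹ i m * y.2 m)
        (hσd hx) (diff_lin (fun m t => (K t)⁻¹ i m) (fun m => hgd hx i m)) i
      rw [e3]
      have e4 := pdq_lin' (x := x) (fun m t => (K t)⁻¹ i m) (fun m => hgd hx i m) i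
      rw [e4]
      rfl
    have hB : ∀ i : Fin r, pdp r (fun y => (Real.exp (σ y.1) • X y).2 i) i x
        = Real.exp (σ x.1) * (-((1/2) * ((∑ d, pdS r (fun t => (K t)⁻¹ i d) i x.1 * x.2 d)
              + ∑ c, pdS r (fun t => (K t)⁻¹ c i) i x.1 * x.2 c))
            - ((∑ j, C i j i x.1 * (∑ m, (K x.1)⁻¹ j m * x.2 m))
              + ∑ j, ∑ k, C i j k x.1 * x.2 k * (K x.1)⁻¹ j i)) := by
      intro i
      have e1 : (fun y => (Real.exp (σ y.1) • X y).2 i)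
          =ᶠ[nhds x] (fun y => Real.exp (σ y.1) *
            (-((1/2) * (∑ c, ∑ d, pdS r (fun t => (K t)⁻¹ c d) i y.1 * y.2 c * y.2 d)
                + pdS r U i y.1)
             - ∑ j, ∑ k, C i j k y.1 * y.2 k * (∑ m, (K y.1)⁻¹ j m * y.2 m))) := by
        filter_upwards [hnb] with y hy
        simp only [hX, Prod.smul_mk, Pi.smul_apply, smul_eq_mul]
        rw [hQ y hy i]
        congr 2
        exact Finset.sum_congr rfl fun j _ => Finset.sum_congr rfl fun k _ => by
          rw [hP y hy j]
      have e2 : pdp r (fun y => (Real.exp (σ y.1) • X y).2 i) i x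
          = pdp r (fun y => Real.exp (σ y.1) *
            (-((1/2) * (∑ c, ∑ d, pdS r (fun t => (K t)⁻¹ c d) i y.1 * y.2 c * y.2 d)
                + pdS r U i y.1)
             - ∑ j, ∑ k, C i j k y.1 * y.2 k * (∑ m, (K y.1)⁻¹ j m * y.2 m))) i x := by
        unfold pdp
        rw [e1.fderiv_eq]
      rw [e2]
      have hfdiff : DifferentiableAt ℝ (fun y : (Fin r → ℝ) × (Fin r → ℝ) =>
          (1/2) * (∑ c, ∑ d, pdS r (fun t => (K t)⁻¹ c d) i y.1 * y.2 c * y.2 d)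
            + pdS r U i y.1) x :=
        diff_quad _ _ (fun c d => hDgd hx i c d) (hDUd hx i)
      have hgdiff : DifferentiableAt ℝ (fun y : (Fin r → ℝ) × (Fin r → ℝ) =>
          ∑ j, ∑ k, C i j k y.1 * y.2 k * (∑ m, (K y.1)⁻¹ j m * y.2 m)) x :=
        diff_gyro (fun j k => C i j k) (fun j m t => (K t)⁻¹ j m)
          (fun c d => hCd i c d hx) (fun c d => hgd hx c d)
      have e3 := pdp_exp_mul' (x := x) σ
        (fun y => -((1/2) * (∑ c, ∑ d, pdS r (fun t => (K t)⁻¹ c d) i y.1 * y.2 c * y.2 d)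
            + pdS r U i y.1)
          - ∑ j, ∑ k, C i j k y.1 * y.2 k * (∑ m, (K y.1)⁻¹ j m * y.2 m))
        (hσd hx) (hfdiff.neg.sub hgdiff) i
      rw [e3]
      have e4 := pdp_neg_sub (x := x) _ _ hfdiff hgdiff i
      rw [e4]
      have e5 := pdp_quad' (x := x) (fun c d t => pdS r (fun t' => (K t')⁻¹ c d) i t)
        (fun t => pdS r U i t) (fun c d => hDgd hx i c d) (hDUd hx i) i
      rw [e5]
      have e6 := pdp_gyro' (x := x) (fun j k => C i j k) (fun j m t => (K t)⁻¹ j m)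
        (fun c d => hCd i c d hx) (fun c d => hgd hx c d) i
      rw [e6]
    have hsum : divg r (fun y => Real.exp (σ y.1) • X y) x
        = (∑ i, Real.exp (σ x.1) * (pdS r σ i x.1 * (∑ m, (K x.1)⁻¹ i m * x.2 m)
            + ∑ m, pdS r (fun t => (K t)⁻¹ i m) i x.1 * x.2 m))
          + ∑ i, Real.exp (σ x.1) *
            (-((1/2) * ((∑ d, pdS r (fun t => (K t)⁻¹ i d) i x.1 * x.2 d)
              + ∑ c, pdS r (fun t => (K t)⁻¹ c i) i x.1 * x.2 c))
            - ((∑ j, C i j i x.1 * (∑ m, (K x.1)⁻¹ j m * x.2 m))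
              + ∑ j, ∑ k, C i j k x.1 * x.2 k * (K x.1)⁻¹ j i)) := by
      simp only [divg]
      congr 1
      · exact Finset.sum_congr rfl fun i _ => hA i
      · exact Finset.sum_congr rfl fun i _ => hB i
    rw [hsum]
    have hsym2 : ∀ i : Fin r, (∑ c, pdS r (fun t => (K t)⁻¹ c i) i x.1 * x.2 c)
        = ∑ d, pdS r (fun t => (K t)⁻¹ i d) i x.1 * x.2 d :=
      fun i => Finset.sum_congr rfl fun c _ => by rw [hDgsym x.1 hx i c i]
    have hzero : (∑ i : Fin r, ∑ j : Fin r, ∑ k : Fin r,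
        C i j k x.1 * x.2 k * (K x.1)⁻¹ j i) = 0 := by
      have h1 : (∑ i : Fin r, ∑ j : Fin r, ∑ k : Fin r, C i j k x.1 * x.2 k * (K x.1)⁻¹ j i)
          = -∑ i : Fin r, ∑ j : Fin r, ∑ k : Fin r, C i j k x.1 * x.2 k * (K x.1)⁻¹ j i := by
        calc (∑ i : Fin r, ∑ j : Fin r, ∑ k : Fin r, C i j k x.1 * x.2 k * (K x.1)⁻¹ j i)
            = ∑ j : Fin r, ∑ i : Fin r, ∑ k : Fin r, C i j k x.1 * x.2 k * (K x.1)⁻¹ j i :=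
              Finset.sum_comm
          _ = ∑ i : Fin r, ∑ j : Fin r, ∑ k : Fin r, C j i k x.1 * x.2 k * (K x.1)⁻¹ i j := rfl
          _ = ∑ i : Fin r, ∑ j : Fin r, ∑ k : Fin r,
              -(C i j k x.1 * x.2 k * (K x.1)⁻¹ j i) := by
              refine Finset.sum_congr rfl fun i _ => Finset.sum_congr rfl fun j _ =>
                Finset.sum_congr rfl fun k _ => ?_
              rw [hCskew j i k, hgsym x.1 hx i j]
              ring
          _ = -∑ i : Fin r, ∑ j : Fin r, ∑ k : Fin r,
              C i j k x.1 * x.2 k * (K x.1)⁻¹ j i := by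
              simp [Finset.sum_neg_distrib]
      linarith
    have hskew2 : (∑ i : Fin r, ∑ j : Fin r, C i j i x.1 * (∑ m, (K x.1)⁻¹ j m * x.2 m))
        = -∑ j : Fin r, ((∑ i, C j i i x.1) * (∑ m, (K x.1)⁻¹ j m * x.2 m)) := by
      calc (∑ i : Fin r, ∑ j : Fin r, C i j i x.1 * (∑ m, (K x.1)⁻¹ j m * x.2 m))
          = ∑ j : Fin r, ∑ i : Fin r, C i j i x.1 * (∑ m, (K x.1)⁻¹ j m * x.2 m) :=
            Finset.sum_comm
        _ = ∑ j : Fin r, ∑ i : Fin r, -(C j i i x.1 * (∑ m, (K x.1)⁻¹ j m * x.2 m)) := by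
            refine Finset.sum_congr rfl fun j _ => Finset.sum_congr rfl fun i _ => ?_
            rw [hCskew i j i]
            ring
        _ = -∑ j : Fin r, ((∑ i, C j i i x.1) * (∑ m, (K x.1)⁻¹ j m * x.2 m)) := by
            rw [show (∑ j : Fin r, ∑ i : Fin r,
                -(C j i i x.1 * (∑ m, (K x.1)⁻¹ j m * x.2 m)))
                = ∑ j : Fin r, -((∑ i, C j i i x.1) * (∑ m, (K x.1)⁻¹ j m * x.2 m)) from
              Finset.sum_congr rfl fun j _ => by
                rw [Finset.sum_neg_distrib, ← Finset.sum_mul]]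
            rw [Finset.sum_neg_distrib]
    rw [← Finset.sum_add_distrib]
    have hper : ∀ i : Fin r,
        (Real.exp (σ x.1) * (pdS r σ i x.1 * (∑ m, (K x.1)⁻¹ i m * x.2 m)
            + ∑ m, pdS r (fun t => (K t)⁻¹ i m) i x.1 * x.2 m)
          + Real.exp (σ x.1) *
            (-((1/2) * ((∑ d, pdS r (fun t => (K t)⁻¹ i d) i x.1 * x.2 d)
              + ∑ c, pdS r (fun t => (K t)⁻¹ c i) i x.1 * x.2 c))
            - ((∑ j, C i j i x.1 * (∑ m, (K x.1)⁻¹ j m * x.2 m))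
              + ∑ j, ∑ k, C i j k x.1 * x.2 k * (K x.1)⁻¹ j i)))
        = Real.exp (σ x.1) * (pdS r σ i x.1 * (∑ m, (K x.1)⁻¹ i m * x.2 m))
          - Real.exp (σ x.1) * (∑ j, C i j i x.1 * (∑ m, (K x.1)⁻¹ j m * x.2 m))
          - Real.exp (σ x.1) * (∑ j, ∑ k, C i j k x.1 * x.2 k * (K x.1)⁻¹ j i) := by
      intro i
      rw [hsym2 i]
      ring
    rw [show (∑ i, (Real.exp (σ x.1) * (pdS r σ i x.1 * (∑ m, (K x.1)⁻¹ i m * x.2 m)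
            + ∑ m, pdS r (fun t => (K t)⁻¹ i m) i x.1 * x.2 m)
          + Real.exp (σ x.1) *
            (-((1/2) * ((∑ d, pdS r (fun t => (K t)⁻¹ i d) i x.1 * x.2 d)
              + ∑ c, pdS r (fun t => (K t)⁻¹ c i) i x.1 * x.2 c))
            - ((∑ j, C i j i x.1 * (∑ m, (K x.1)⁻¹ j m * x.2 m))
              + ∑ j, ∑ k, C i j k x.1 * x.2 k * (K x.1)⁻¹ j i))))
        = ∑ i, (Real.exp (σ x.1) * (pdS r σ i x.1 * (∑ m, (K x.1)⁻¹ i m * x.2 m))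
          - Real.exp (σ x.1) * (∑ j, C i j i x.1 * (∑ m, (K x.1)⁻¹ j m * x.2 m))
          - Real.exp (σ x.1) * (∑ j, ∑ k, C i j k x.1 * x.2 k * (K x.1)⁻¹ j i)) from
      Finset.sum_congr rfl fun i _ => hper i]
    rw [Finset.sum_sub_distrib, Finset.sum_sub_distrib,
      ← Finset.mul_sum, ← Finset.mul_sum, ← Finset.mul_sum,
      hskew2, hzero, mul_zero, sub_zero, mul_neg, sub_neg_eq_add, ← mul_add]
    congr 1
    rw [← Finset.sum_add_distrib]
    exact Finset.sum_congr rfl fun j _ => by ring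
  constructor
  · intro h i s hs
    have hx := h (s, (K s).mulVec (Pi.single i 1)) hs
    rw [main (s, (K s).mulVec (Pi.single i 1)) hs] at hx
    have hPj : ∀ j : Fin r, (∑ m, (K s)⁻¹ j m * ((K s).mulVec (Pi.single i 1)) m)
        = if j = i then 1 else 0 := by
      intro j
      have h1 : (∑ m, (K s)⁻¹ j m * ((K s).mulVec (Pi.single i 1)) m)
          = ((K s)⁻¹).mulVec ((K s).mulVec (Pi.single i 1)) j := by
        simp [Matrix.mulVec, dotProduct]
      rw [h1, Matrix.mulVec_mulVec, Matrix.nonsing_inv_mul _ (hKpos s hs).det_pos.ne'.isUnit,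
        Matrix.one_mulVec]
      simp [Pi.single_apply]
    simp only [hPj, mul_ite, mul_one, mul_zero, Finset.sum_ite_eq', Finset.mem_univ,
      if_true] at hx
    rcases mul_eq_zero.mp hx with h' | h'
    · exact absurd h' (Real.exp_ne_zero (σ s))
    · linarith
  · intro h x hx
    rw [main x hx]
    have hz : ∀ j : Fin r, pdS r σ j x.1 + ∑ i, C j i i x.1 = 0 := by
      intro j
      rw [h j x.1 hx]
      ring
    rw [show (∑ j, ((pdS r σ j x.1 + ∑ i, C j i i x.1) * (∑ m, (K x.1)⁻¹ j m * x.2 m))) = 0 from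
      Finset.sum_eq_zero fun j _ => by rw [hz j, zero_mul]]
    rw [mul_zero]
end
end

section
/- (Chaplygin's Reducing Multiplier Theorem, r = 2.) Let r = 2 and let σ : S → ℝ be smooth with ∂σ/∂s^i = − Σ_{j=1}^2 C_{ij}^j on S for i = 1, 2 (equivalently, the measure e^{σ(s)} ds dp is invariant under the reduced equations). Let (s, p) : I → S × ℝ^2 be any solution of the reduced equations of motion on an open interval I, let τ : I → ℝ be a smooth strictly increasing function with τ'(t) = e^{σ(s(t))} for all t ∈ I, let J = τ(I) and t : J → I be the inverse of τ. Define s̃(u) := s(t(u)) and p̃_i(u) := e^{σ(s(t(u)))} p_i(t(u)) for u ∈ J, i = 1, 2. Then (s̃, p̃) : J → S × ℝ^2 solves Hamilton's canonical equations ds̃^i/du = ∂H̃/∂p̃_i, dp̃_i/du = −∂H̃/∂s^i, where H̃ : S × ℝ^2 → ℝ is defined by H̃(s, p̃) := H(s, e^{−σ(s)} p̃). -/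
noncomputable section

abbrev E2 := (Fin 2 → ℝ)

theorem pd_formulas (g : Fin 2 → Fin 2 → E2 → ℝ) (U : E2 → ℝ)
    (q w : E2) (hg : ∀ i j, DifferentiableAt ℝ (g i j) q) (hU : DifferentiableAt ℝ U q)
    (H : E2 × E2 → ℝ)
    (hH : ∀ x, H x = (1/2) * (∑ i, ∑ j, g i j x.1 * x.2 i * x.2 j) + U x.1) (k : Fin 2) :
    pdq 2 H k (q, w) = (1/2) * (∑ i, ∑ j, pdS 2 (g i j) k q * w i * w j) + pdS 2 U k q ∧
    pdp 2 H k (q, w) = (1/2) * ((∑ j, g k j q * w j) + (∑ i, g i k q * w i)) := by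
  have hHfun : H = fun x => (1/2) * (∑ i, ∑ j, g i j x.1 * x.2 i * x.2 j) + U x.1 := funext hH
  subst hHfun
  have hgf : ∀ i j : Fin 2, HasFDerivAt (fun x : E2 × E2 => g i j x.1)
      ((fderiv ℝ (g i j) q).comp (ContinuousLinearMap.fst ℝ E2 E2)) (q, w) :=
    fun i j => ((hg i j).hasFDerivAt).comp (q, w) hasFDerivAt_fst
  have hpf : ∀ i : Fin 2, HasFDerivAt (fun x : E2 × E2 => x.2 i)
      ((ContinuousLinearMap.proj i).comp (ContinuousLinearMap.snd ℝ E2 E2)) (q, w) :=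
    fun i => ((ContinuousLinearMap.proj (R := ℝ) (φ := fun _ : Fin 2 => ℝ) i).comp
      (ContinuousLinearMap.snd ℝ E2 E2)).hasFDerivAt
  have hUf : HasFDerivAt (fun x : E2 × E2 => U x.1)
      ((fderiv ℝ U q).comp (ContinuousLinearMap.fst ℝ E2 E2)) (q, w) :=
    (hU.hasFDerivAt).comp (q, w) hasFDerivAt_fst
  have hL := ((HasFDerivAt.fun_sum (fun i (_ : i ∈ Finset.univ) =>
      HasFDerivAt.fun_sum (fun j (_ : j ∈ Finset.univ) =>
        ((hgf i j).fun_mul (hpf i)).fun_mul (hpf j)))).const_mul ((1:ℝ)/2)).fun_add hUf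
  constructor
  · show fderiv ℝ _ (q, w) _ = _
    rw [hL.fderiv]
    simp only [ContinuousLinearMap.add_apply, ContinuousLinearMap.smul_apply,
      ContinuousLinearMap.coe_sum', Finset.sum_apply, ContinuousLinearMap.comp_apply,
      ContinuousLinearMap.coe_fst', ContinuousLinearMap.coe_snd',
      ContinuousLinearMap.proj_apply, Pi.zero_apply, smul_eq_mul, map_zero]
    simp only [pdS, Fin.sum_univ_two]
    ring
  · show fderiv ℝ _ (q, w) _ = _
    rw [hL.fderiv]
    simp only [ContinuousLinearMap.add_apply, ContinuousLinearMap.smul_apply,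
      ContinuousLinearMap.coe_sum', Finset.sum_apply, ContinuousLinearMap.comp_apply,
      ContinuousLinearMap.coe_fst', ContinuousLinearMap.coe_snd',
      ContinuousLinearMap.proj_apply, Pi.zero_apply, smul_eq_mul, map_zero]
    fin_cases k <;>
      simp [Fin.sum_univ_two, Pi.single_apply] <;> ring

theorem pdS_mul (f h : E2 → ℝ) (q : E2) (hf : DifferentiableAt ℝ f q)
    (hh : DifferentiableAt ℝ h q) (k : Fin 2) :
    pdS 2 (fun q' => f q' * h q') k q = pdS 2 f k q * h q + f q * pdS 2 h k q := by
  unfold pdS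
  rw [(hf.hasFDerivAt.fun_mul hh.hasFDerivAt).fderiv]
  simp only [ContinuousLinearMap.add_apply, ContinuousLinearMap.smul_apply, smul_eq_mul]
  ring

theorem pdS_exp_neg (σ : E2 → ℝ) (q : E2) (hσ : DifferentiableAt ℝ σ q) (k : Fin 2) :
    pdS 2 (fun q' => Real.exp (-σ q')) k q = -(Real.exp (-σ q) * pdS 2 σ k q) := by
  unfold pdS
  rw [(((hσ.hasFDerivAt).fun_neg).exp).fderiv]
  simp only [ContinuousLinearMap.smul_apply, ContinuousLinearMap.neg_apply, smul_eq_mul]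
  ring

theorem kinv_diff (S : Set E2) (hS : IsOpen S)
    (K : E2 → Matrix (Fin 2) (Fin 2) ℝ)
    (hKsmooth : ∀ i j, ContDiffOn ℝ (⊤ : ℕ∞) (fun s => K s i j) S)
    (hKpos : ∀ s ∈ S, (K s).PosDef) (q : E2) (hq : q ∈ S) (i j : Fin 2) :
    DifferentiableAt ℝ (fun s => (K s)⁻¹ i j) q := by
  have hd : ∀ i j : Fin 2, DifferentiableAt ℝ (fun s => K s i j) q := fun i j =>
    ((hKsmooth i j).contDiffAt (hS.mem_nhds hq)).differentiableAt (by simp)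
  have hdet : ∀ s, (K s).det = K s 0 0 * K s 1 1 - K s 0 1 * K s 1 0 := fun s =>
    Matrix.det_fin_two (K s)
  have hdetdiff : DifferentiableAt ℝ (fun s => (K s).det) q := by
    simp only [hdet]
    exact ((hd 0 0).mul (hd 1 1)).sub ((hd 0 1).mul (hd 1 0))
  have hdetne : (K q).det ≠ 0 := ne_of_gt (hKpos q hq).det_pos
  have hinv : ∀ s, (K s)⁻¹ i j = ((K s).det)⁻¹ * (K s).adjugate i j := by
    intro s
    rw [Matrix.inv_def, Ring.inverse_eq_inv]
    simp [Matrix.smul_apply, mul_comm]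
  simp only [hinv]
  refine DifferentiableAt.mul (hdetdiff.inv hdetne) ?_
  have hadj : ∀ s, (K s).adjugate = !![K s 1 1, -(K s 0 1); -(K s 1 0), K s 0 0] := fun s =>
    Matrix.adjugate_fin_two (K s)
  simp only [hadj]
  fin_cases i <;> fin_cases j <;>
    simp [Matrix.cons_val_zero, Matrix.cons_val_one] <;>
    first
      | exact hd 1 1
      | exact (hd 0 1).neg
      | exact (hd 1 0).neg
      | exact hd 0 1
      | exact hd 1 0
      | exact hd 0 0

theorem clm_apply_two (L : E2 →L[ℝ] ℝ) (x : E2) :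
    L x = x 0 * L (Pi.single 0 1) + x 1 * L (Pi.single 1 1) := by
  have hx : x = x 0 • (Pi.single 0 1 : E2) + x 1 • (Pi.single 1 1 : E2) := by
    funext j; fin_cases j <;> simp [Pi.single_apply]
  conv_lhs => rw [hx]
  rw [map_add, map_smul, map_smul]
  simp [smul_eq_mul]

set_option maxHeartbeats 1000000 in
/-- Chaplygin's Reducing Multiplier Theorem (`r = 2`).  If the measure
`e^{σ(s)} ds dp` is invariant (i.e. `∂σ/∂s^i = −Σ_j C_{ij}^j` on `S`), then along any
solution of the reduced equations the time reparametrisation `dτ = e^{σ(s)} dt`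
and momentum rescaling `p̃ = e^{σ(s)} p` yield a solution of Hamilton's canonical
equations for `H̃(s,p̃) = H(s, e^{−σ(s)} p̃)`. -/
theorem chaplygin_reducing_multiplier_r2
    (S : Set (Fin 2 → ℝ)) (hS : IsOpen S)
    (K : (Fin 2 → ℝ) → Matrix (Fin 2) (Fin 2) ℝ)
    (hKsmooth : ∀ i j, ContDiffOn ℝ (⊤ : ℕ∞) (fun s => K s i j) S)
    (hKsym : ∀ s ∈ S, (K s).IsSymm)
    (hKpos : ∀ s ∈ S, (K s).PosDef)
    (U : (Fin 2 → ℝ) → ℝ) (hU : ContDiffOn ℝ (⊤ : ℕ∞) U S)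
    (C : Fin 2 → Fin 2 → Fin 2 → (Fin 2 → ℝ) → ℝ)
    (hCsmooth : ∀ i j k, ContDiffOn ℝ (⊤ : ℕ∞) (C i j k) S)
    (hCskew : ∀ i j k s, C i j k s = - C j i k s)
    (H : (Fin 2 → ℝ) × (Fin 2 → ℝ) → ℝ)
    (hH : ∀ x, H x = (1/2) * (∑ i, ∑ j, (K x.1)⁻¹ i j * x.2 i * x.2 j) + U x.1)
    -- the invariant measure `e^{σ(s)} ds dp`:
    (σ : (Fin 2 → ℝ) → ℝ) (hσ : ContDiffOn ℝ (⊤ : ℕ∞) σ S)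
    (hσeq : ∀ i, ∀ s ∈ S, pdS 2 σ i s = - ∑ j, C i j j s)
    -- a solution `(s,p)` of the reduced equations on an open interval `I`:
    (aI bI : ℝ) (I : Set ℝ) (hI : I = Set.Ioo aI bI)
    (s p : ℝ → Fin 2 → ℝ) (hmem : ∀ t ∈ I, s t ∈ S)
    (hsol1 : ∀ t ∈ I, ∀ i, HasDerivAt (fun t' => s t' i) (pdp 2 H i (s t, p t)) t)
    (hsol2 : ∀ t ∈ I, ∀ i, HasDerivAt (fun t' => p t' i)
      (- pdq 2 H i (s t, p t)
        - ∑ j, ∑ k, C i j k (s t) * p t k * pdp 2 H j (s t, p t)) t)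
    -- the new time `τ` with `τ'(t) = e^{σ(s(t))}`, and its inverse `tt`:
    (τ : ℝ → ℝ) (hτsmooth : ContDiffOn ℝ (⊤ : ℕ∞) τ I) (hτmono : StrictMonoOn τ I)
    (hτ' : ∀ t ∈ I, HasDerivAt τ (Real.exp (σ (s t))) t)
    (Jset : Set ℝ) (hJset : Jset = τ '' I)
    (tt : ℝ → ℝ) (htt : ∀ t ∈ I, tt (τ t) = t)
    -- the reparametrised curves and the new Hamiltonian:
    (st pt : ℝ → Fin 2 → ℝ)
    (hst : ∀ u, st u = s (tt u))
    (hpt : ∀ u i, pt u i = Real.exp (σ (s (tt u))) * p (tt u) i)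
    (Ht : (Fin 2 → ℝ) × (Fin 2 → ℝ) → ℝ)
    (hHt : ∀ x, Ht x = H (x.1, fun i => Real.exp (-σ x.1) * x.2 i)) :
    ∀ u ∈ Jset, ∀ i,
      HasDerivAt (fun u' => st u' i) (pdp 2 Ht i (st u, pt u)) u ∧
      HasDerivAt (fun u' => pt u' i) (- pdq 2 Ht i (st u, pt u)) u := by
  intro u hu i
  rw [hJset] at hu
  obtain ⟨t₀, ht₀, htau⟩ := hu
  have hIopen : IsOpen I := hI ▸ isOpen_Ioo
  have hqS : s t₀ ∈ S := hmem t₀ ht₀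
  have htt0 : tt u = t₀ := by rw [← htau]; exact htt t₀ ht₀
  -- basic differentiability at q := s t₀
  set q := s t₀ with hq
  have hσd : DifferentiableAt ℝ σ q :=
    ((hσ.contDiffAt (hS.mem_nhds hqS))).differentiableAt (by simp)
  have hUd : DifferentiableAt ℝ U q :=
    ((hU.contDiffAt (hS.mem_nhds hqS))).differentiableAt (by simp)
  have hexpd : DifferentiableAt ℝ (fun q' => Real.exp (-σ q')) q := by
    have : DifferentiableAt ℝ (fun q' : E2 => -σ q') q := hσd.neg
    exact this.exp
  set g : Fin 2 → Fin 2 → E2 → ℝ := fun i j q' => (K q')⁻¹ i j with hgdef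
  have hgd : ∀ i j, DifferentiableAt ℝ (g i j) q := fun i j =>
    kinv_diff S hS K hKsmooth hKpos q hqS i j
  set gt : Fin 2 → Fin 2 → E2 → ℝ :=
    fun i j q' => g i j q' * Real.exp (-σ q') * Real.exp (-σ q') with hgtdef
  have hgtd : ∀ i j, DifferentiableAt ℝ (gt i j) q := fun i j =>
    ((hgd i j).mul hexpd).mul hexpd
  -- the Hamiltonians in standard form
  have hH' : ∀ x : E2 × E2, H x = (1/2) * (∑ i, ∑ j, g i j x.1 * x.2 i * x.2 j) + U x.1 :=
    fun x => hH x
  have hHt' : ∀ x : E2 × E2, Ht x = (1/2) * (∑ i, ∑ j, gt i j x.1 * x.2 i * x.2 j) + U x.1 := by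
    intro x
    rw [hHt, hH]
    simp only [hgtdef, hgdef, Fin.sum_univ_two]
    ring
  set w : E2 := p t₀ with hw
  set wt : E2 := fun j => Real.exp (σ q) * w j with hwt
  have hpdH := fun k => pd_formulas g U q w hgd hUd H hH' k
  have hpdHt := fun k => pd_formulas gt U q wt hgtd hUd Ht hHt' k
  -- pdS of gt
  have hpdSgt : ∀ i j k, pdS 2 (gt i j) k q =
      (pdS 2 (g i j) k q - 2 * g i j q * pdS 2 σ k q) *
        (Real.exp (-σ q) * Real.exp (-σ q)) := by
    intro i j k
    have h1 : pdS 2 (gt i j) k q =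
        pdS 2 (fun q' => g i j q' * Real.exp (-σ q')) k q * Real.exp (-σ q) +
          (g i j q * Real.exp (-σ q)) * pdS 2 (fun q' => Real.exp (-σ q')) k q :=
      pdS_mul _ _ q ((hgd i j).mul hexpd) hexpd k
    have h2 : pdS 2 (fun q' => g i j q' * Real.exp (-σ q')) k q =
        pdS 2 (g i j) k q * Real.exp (-σ q) +
          g i j q * pdS 2 (fun q' => Real.exp (-σ q')) k q :=
      pdS_mul _ _ q (hgd i j) hexpd k
    rw [h1, h2, pdS_exp_neg σ q hσd k]
    ring
  -- positions and momenta at u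
  have hstu : st u = q := by rw [hst, htt0]
  have hptu : pt u = wt := by funext j; rw [hpt, htt0]
  -- derivative of tt
  have httd : HasDerivAt tt (Real.exp (σ q))⁻¹ u := by
    have hstrict : HasStrictDerivAt τ (Real.exp (σ q)) t₀ :=
      (hτsmooth.contDiffAt (hIopen.mem_nhds ht₀)).hasStrictDerivAt' (hτ' t₀ ht₀) (by simp)
    have hev : ∀ᶠ t in nhds t₀, tt (τ t) = t :=
      Filter.eventually_of_mem (hIopen.mem_nhds ht₀) htt
    have := (hstrict.to_local_left_inverse (Real.exp_ne_zero _) hev).hasDerivAt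
    rwa [htau] at this
  -- velocity vector
  set v : E2 := fun j => pdp 2 H j (q, w) with hv
  have hscurve : HasDerivAt s v t₀ := hasDerivAt_pi.2 fun j => hsol1 t₀ ht₀ j
  have hσs : HasDerivAt (fun t => σ (s t)) (fderiv ℝ σ q v) t₀ :=
    (hσd.hasFDerivAt).comp_hasDerivAt t₀ hscurve
  have hfσv : fderiv ℝ σ q v = v 0 * pdS 2 σ 0 q + v 1 * pdS 2 σ 1 q :=
    clm_apply_two (fderiv ℝ σ q) v
  -- useful facts
  have hF : Real.exp (σ q) = (Real.exp (-σ q))⁻¹ := by rw [Real.exp_neg, inv_inv]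
  have hEne : Real.exp (-σ q) ≠ 0 := Real.exp_ne_zero _
  have hC0 : ∀ a k, C a a k q = 0 := fun a k => by have := hCskew a a k q; linarith
  have hC10 : ∀ k, C 1 0 k q = - C 0 1 k q := fun k => hCskew 1 0 k q
  have hi2 : i = 0 ∨ i = 1 := by omega
  have hCr : (C 0 0 0 q = 0 ∧ C 0 0 1 q = 0) ∧ (C 1 1 0 q = 0 ∧ C 1 1 1 q = 0) ∧
      (C 1 0 0 q = - C 0 1 0 q ∧ C 1 0 1 q = - C 0 1 1 q) :=
    ⟨⟨hC0 0 0, hC0 0 1⟩, ⟨hC0 1 0, hC0 1 1⟩, hC10 0, hC10 1⟩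
  constructor
  · -- position equation
    have hfun1 : (fun u' => st u' i) = ((fun t => s t i) ∘ tt) :=
      funext fun u' => by rw [hst u']; rfl
    have h2 : HasDerivAt (fun t => s t i) (v i) (tt u) := by
      rw [htt0]; exact hsol1 t₀ ht₀ i
    have hcomp := HasDerivAt.comp u h2 httd
    rw [hfun1, hstu, hptu]
    have hkey : pdp 2 Ht i (q, wt) = v i * (Real.exp (σ q))⁻¹ := by
      rw [(hpdHt i).2]
      rcases hi2 with rfl | rfl <;>
        · simp only [hv, hgtdef, hwt, Fin.sum_univ_two]
          simp only [(hpdH 0).2, (hpdH 1).2, Fin.sum_univ_two, hF]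
          field_simp
    rw [hkey]
    exact hcomp
  · -- momentum equation
    have hfun2 : (fun u' => pt u' i) = ((fun t => Real.exp (σ (s t)) * p t i) ∘ tt) :=
      funext fun u' => hpt u' i
    have hexps : HasDerivAt (fun t => Real.exp (σ (s t)))
        (Real.exp (σ (s t₀)) * fderiv ℝ σ q v) t₀ := hσs.exp
    have hpi : HasDerivAt (fun t => p t i)
        (- pdq 2 H i (q, w) - ∑ j, ∑ k, C i j k q * w k * pdp 2 H j (q, w)) t₀ :=
      hsol2 t₀ ht₀ i
    have hmul := hexps.mul hpi
    have h2 : HasDerivAt (fun t => Real.exp (σ (s t)) * p t i)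
        ((Real.exp (σ (s t₀)) * fderiv ℝ σ q v) * p t₀ i +
          Real.exp (σ (s t₀)) *
            (- pdq 2 H i (q, w) - ∑ j, ∑ k, C i j k q * w k * pdp 2 H j (q, w))) (tt u) := by
      rw [htt0]; exact hmul
    have hcomp := HasDerivAt.comp u h2 httd
    rw [hfun2, hstu, hptu]
    have hkey : - pdq 2 Ht i (q, wt) =
        ((Real.exp (σ (s t₀)) * fderiv ℝ σ q v) * p t₀ i +
          Real.exp (σ (s t₀)) *
            (- pdq 2 H i (q, w) - ∑ j, ∑ k, C i j k q * w k * pdp 2 H j (q, w))) *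
          (Real.exp (σ q))⁻¹ := by
      rw [(hpdHt i).1, (hpdH i).1, hfσv]
      rcases hi2 with rfl | rfl <;>
        · simp only [hpdSgt, hwt, hv, Fin.sum_univ_two]
          simp only [(hpdH 0).2, (hpdH 1).2, Fin.sum_univ_two]
          rw [hσeq 0 q hqS, hσeq 1 q hqS]
          simp only [Fin.sum_univ_two, hCr.1.1, hCr.1.2, hCr.2.1.1, hCr.2.1.2,
            hCr.2.2.1, hCr.2.2.2]
          rw [hF]
          field_simp
          ring
    rw [hkey]
    exact hcomp
end
end

section
/- (Generalisation of Chaplygin's Reducing Multiplier Theorem.) Suppose the gyroscopic coefficients satisfy hypothesis (H) everywhere on S: for all s ∈ S, C_{ij}^k(s) = 0 whenever i, j, k are pairwise distinct, and C_{ij}^j(s) = C_{ik}^k(s) whenever j ≠ i and k ≠ i. Suppose further that σ : S → ℝ is smooth with ∂σ/∂s^i = − Σ_{j=1}^r C_{ij}^j on S for every i = 1,…,r (equivalently, the measure e^{σ(s)} ds dp is invariant under the reduced equations). Let (s, p) : I → S × ℝ^r be any solution of the reduced equations of motion on an open interval I, let τ : I → ℝ be a smooth strictly increasing function with τ'(t)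 = e^{σ(s(t))/(r−1)} for all t ∈ I, let J = τ(I) and t : J → I be the inverse of τ. Define s̃(u) := s(t(u)) and p̃_i(u) := e^{σ(s(t(u)))/(r−1)} p_i(t(u)) for u ∈ J, i = 1,…,r. Then (s̃, p̃) : J → S × ℝ^r solves Hamilton's canonical equations ds̃^i/du = ∂H̃/∂p̃_i, dp̃_i/du = −∂H̃/∂s^i, where H̃ : S × ℝ^r → ℝ is defined by H̃(s, p̃) := H(s, e^{−σ(s)/(r−1)} p̃). -/
noncomputable section

/-- Auxiliary: a matrix-valued map with smooth entries has smooth determinant. -/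
private lemma contDiffOn_matrix_det {r : ℕ} {S : Set (Fin r → ℝ)}
    {M : (Fin r → ℝ) → Matrix (Fin r) (Fin r) ℝ}
    (hM : ∀ i j, ContDiffOn ℝ (⊤ : ℕ∞) (fun s => M s i j) S) :
    ContDiffOn ℝ (⊤ : ℕ∞) (fun s => (M s).det) S := by
  simp only [Matrix.det_apply']
  apply ContDiffOn.sum
  intro σ _
  exact contDiffOn_const.mul (contDiffOn_prod fun k _ => hM (σ k) k)

/-- Auxiliary: entries of the inverse of a matrix-valued map with smooth entries and
nonvanishing determinant are smooth. -/
private lemma contDiffOn_matrix_inv {r : ℕ} {S : Set (Fin r → ℝ)}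
    {M : (Fin r → ℝ) → Matrix (Fin r) (Fin r) ℝ}
    (hM : ∀ i j, ContDiffOn ℝ (⊤ : ℕ∞) (fun s => M s i j) S)
    (hdet : ∀ s ∈ S, (M s).det ≠ 0) (i j : Fin r) :
    ContDiffOn ℝ (⊤ : ℕ∞) (fun s => (M s)⁻¹ i j) S := by
  have hadj : ContDiffOn ℝ (⊤ : ℕ∞) (fun s => (M s).adjugate i j) S := by
    simp only [Matrix.adjugate_apply]
    apply contDiffOn_matrix_det
    intro a b
    rcases eq_or_ne a j with rfl | h
    · simp only [Matrix.updateRow_apply, if_pos rfl]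
      exact contDiffOn_const
    · simp only [Matrix.updateRow_apply, if_neg h]
      exact hM a b
  have heq : (fun s => (M s)⁻¹ i j) = fun s => ((M s).det)⁻¹ * (M s).adjugate i j :=
    funext fun s => by
      rw [Matrix.inv_def, Matrix.smul_apply, Ring.inverse_eq_inv, smul_eq_mul]
  rw [heq]
  exact ((contDiffOn_matrix_det hM).inv hdet).mul hadj

/-- Auxiliary: every vector in `Fin r → ℝ` is the sum of its coordinates times basis vectors. -/
private lemma pi_single_sum {r : ℕ} (x : Fin r → ℝ) :
    x = ∑ j, (x j) • (Pi.single j 1 : Fin r → ℝ) := by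
  ext k
  rw [Finset.sum_apply]
  simp [Pi.single_apply]

/-- Auxiliary: the key finite-sum identity behind the reducing multiplier theorem. -/
private lemma chap_sum_identity {r : ℕ} (d : ℝ) (hd : d ≠ 0) (A c P : Fin r → ℝ) (i : Fin r) :
    (∑ k, A k * (-(d * c k))) / d * P i
      - (∑ j, (if j = i then 0 else c i * P j - c j * P i) * A j)
      = d⁻¹ * (-(d * c i)) * (∑ j, P j * A j) := by
  have h1 : (∑ j, (if j = i then 0 else c i * P j - c j * P i) * A j)
      = ∑ j, (c i * P j - c j * P i) * A j := by
    refine Finset.sum_congr rfl fun j _ => ?_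
    rcases eq_or_ne j i with rfl | h
    · simp
    · simp [h]
  have h2 : (∑ k, A k * (-(d * c k))) / d = ∑ k, -(A k * c k) := by
    rw [div_eq_iff hd, Finset.sum_mul]
    exact Finset.sum_congr rfl fun k _ => by ring
  have h3 : d⁻¹ * (-(d * c i)) = - c i := by field_simp
  rw [h1, h2, h3, Finset.sum_mul, ← sub_eq_zero, ← Finset.sum_sub_distrib]
  rw [show (- c i * ∑ j, P j * A j) = ∑ j, - c i * (P j * A j) from Finset.mul_sum _ _ _,
    ← Finset.sum_sub_distrib]
  apply Finset.sum_eq_zero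
  intro j _
  ring

/-- Generalisation of Chaplygin's Reducing Multiplier Theorem.  Suppose
the gyroscopic coefficients satisfy hypothesis (H) on `S` and the measure
`e^{σ(s)} ds dp` is invariant (`∂σ/∂s^i = −Σ_j C_{ij}^j` on `S`).  Then along any
solution of the reduced equations, the reparametrisation `dτ = e^{σ(s)/(r−1)} dt`,
`p̃ = e^{σ(s)/(r−1)} p` yields a solution of Hamilton's canonical equations for
`H̃(s,p̃) = H(s, e^{−σ(s)/(r−1)} p̃)`. -/

theorem generalised_chaplygin_reducing_multiplier
    (r : ℕ) (hr : 2 ≤ r)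
    (S : Set (Fin r → ℝ)) (hS : IsOpen S)
    (K : (Fin r → ℝ) → Matrix (Fin r) (Fin r) ℝ)
    (hKsmooth : ∀ i j, ContDiffOn ℝ (⊤ : ℕ∞) (fun s => K s i j) S)
    (hKsym : ∀ s ∈ S, (K s).IsSymm)
    (hKpos : ∀ s ∈ S, (K s).PosDef)
    (U : (Fin r → ℝ) → ℝ) (hU : ContDiffOn ℝ (⊤ : ℕ∞) U S)
    (C : Fin r → Fin r → Fin r → (Fin r → ℝ) → ℝ)
    (hCsmooth : ∀ i j k, ContDiffOn ℝ (⊤ : ℕ∞) (C i j k) S)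
    (hCskew : ∀ i j k s, C i j k s = - C j i k s)
    (H : (Fin r → ℝ) × (Fin r → ℝ) → ℝ)
    (hH : ∀ x, H x = (1/2) * (∑ i, ∑ j, (K x.1)⁻¹ i j * x.2 i * x.2 j) + U x.1)
    -- hypothesis (H) everywhere on S:
    (hHyp1 : ∀ s ∈ S, ∀ i j k, i ≠ j → j ≠ k → i ≠ k → C i j k s = 0)
    (hHyp2 : ∀ s ∈ S, ∀ i j k, j ≠ i → k ≠ i → C i j j s = C i k k s)
    -- the invariant measure `e^{σ(s)} ds dp`:
    (σ : (Fin r → ℝ) → ℝ) (hσ : ContDiffOn ℝ (⊤ : ℕ∞) σ S)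
    (hσeq : ∀ i, ∀ s ∈ S, pdS r σ i s = - ∑ j, C i j j s)
    -- a solution `(s,p)` of the reduced equations on an open interval `I`:
    (aI bI : ℝ) (I : Set ℝ) (hI : I = Set.Ioo aI bI)
    (s p : ℝ → Fin r → ℝ) (hmem : ∀ t ∈ I, s t ∈ S)
    (hsol1 : ∀ t ∈ I, ∀ i, HasDerivAt (fun t' => s t' i) (pdp r H i (s t, p t)) t)
    (hsol2 : ∀ t ∈ I, ∀ i, HasDerivAt (fun t' => p t' i)
      (- pdq r H i (s t, p t)
        - ∑ j, ∑ k, C i j k (s t) * p t k * pdp r H j (s t, p t)) t)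
    -- the new time `τ` with `τ'(t) = e^{σ(s(t))/(r−1)}`, and its inverse `tt`:
    (τ : ℝ → ℝ) (hτsmooth : ContDiffOn ℝ (⊤ : ℕ∞) τ I) (hτmono : StrictMonoOn τ I)
    (hτ' : ∀ t ∈ I, HasDerivAt τ (Real.exp (σ (s t) / ((r : ℝ) - 1))) t)
    (Jset : Set ℝ) (hJset : Jset = τ '' I)
    (tt : ℝ → ℝ) (htt : ∀ t ∈ I, tt (τ t) = t)
    -- the reparametrised curves and the new Hamiltonian:
    (st pt : ℝ → Fin r → ℝ)
    (hst : ∀ u, st u = s (tt u))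
    (hpt : ∀ u i, pt u i = Real.exp (σ (s (tt u)) / ((r : ℝ) - 1)) * p (tt u) i)
    (Ht : (Fin r → ℝ) × (Fin r → ℝ) → ℝ)
    (hHt : ∀ x, Ht x = H (x.1, fun i => Real.exp (-σ x.1 / ((r : ℝ) - 1)) * x.2 i)) :
    ∀ u ∈ Jset, ∀ i,
      HasDerivAt (fun u' => st u' i) (pdp r Ht i (st u, pt u)) u ∧
      HasDerivAt (fun u' => pt u' i) (- pdq r Ht i (st u, pt u)) u := by
  intro u hu i
  rw [hJset] at hu
  obtain ⟨t0, ht0, rfl⟩ := hu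
  have hIopen : IsOpen I := hI ▸ isOpen_Ioo
  have hmemS : s t0 ∈ S := hmem t0 ht0
  have htt0 : tt (τ t0) = t0 := htt t0 ht0
  have hd : ((r:ℝ) - 1) ≠ 0 := by
    have h2r : (2:ℝ) ≤ (r:ℝ) := by exact_mod_cast hr
    linarith
  set lam : ℝ := Real.exp (σ (s t0) / ((r:ℝ) - 1)) with hlamdef
  set est : ℝ := Real.exp (-σ (s t0) / ((r:ℝ) - 1)) with hestdef
  have hlamne : lam ≠ 0 := Real.exp_ne_zero _
  have hprod : est * lam = 1 := by
    rw [hestdef, hlamdef, ← Real.exp_add, ← add_div, neg_add_cancel, zero_div,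
      Real.exp_zero]
  have hestinv : est = lam⁻¹ := eq_inv_of_mul_eq_one_left hprod
  have hinv : lam * lam⁻¹ = 1 := mul_inv_cancel₀ hlamne
  -- σ differentiable
  have hσdiff : DifferentiableAt ℝ σ (s t0) :=
    (hσ.differentiableOn (by simp)).differentiableAt (hS.mem_nhds hmemS)
  set Dσ : (Fin r → ℝ) →L[ℝ] ℝ := fderiv ℝ σ (s t0) with hDσdef
  have hDσ : HasFDerivAt σ Dσ (s t0) := hσdiff.hasFDerivAt
  have hpdS : ∀ k, pdS r σ k (s t0) = Dσ (Pi.single k 1) := fun k => by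
    rw [pdS, hDσdef]
  -- H differentiable
  have hKinv : ∀ a b, ContDiffOn ℝ (⊤ : ℕ∞) (fun s' => (K s')⁻¹ a b) S := fun a b =>
    contDiffOn_matrix_inv hKsmooth (fun s' hs' => (hKpos s' hs').det_pos.ne') a b
  have hHfun : H = fun x : (Fin r → ℝ) × (Fin r → ℝ) =>
      (1/2) * (∑ a, ∑ b, (K x.1)⁻¹ a b * x.2 a * x.2 b) + U x.1 := funext hH
  have hHcd : ContDiffOn ℝ (⊤ : ℕ∞) H (S ×ˢ (Set.univ : Set (Fin r → ℝ))) := by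
    rw [hHfun]
    apply ContDiffOn.add
    · apply contDiffOn_const.mul
      apply ContDiffOn.sum; intro a _
      apply ContDiffOn.sum; intro b _
      apply ContDiffOn.mul
      apply ContDiffOn.mul
      · exact (hKinv a b).comp contDiff_fst.contDiffOn fun x hx => hx.1
      · exact (((ContinuousLinearMap.proj (R := ℝ) (φ := fun _ : Fin r => ℝ) a)).contDiff.comp
          contDiff_snd).contDiffOn
      · exact (((ContinuousLinearMap.proj (R := ℝ) (φ := fun _ : Fin r => ℝ) b)).contDiff.comp
          contDiff_snd).contDiffOn
    · exact hU.comp contDiff_fst.contDiffOn fun x hx => hx.1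
  have hHdiff : DifferentiableAt ℝ H (s t0, p t0) :=
    (hHcd.differentiableOn (by simp)).differentiableAt
      ((hS.prod isOpen_univ).mem_nhds ⟨hmemS, trivial⟩)
  set DH := fderiv ℝ H (s t0, p t0) with hDHdef
  have hDH : HasFDerivAt H DH (s t0, p t0) := hHdiff.hasFDerivAt
  have hpdpH : ∀ j, pdp r H j (s t0, p t0) = DH (0, Pi.single j 1) := fun j => by
    rw [pdp, hDHdef]
  have hpdqH : pdq r H i (s t0, p t0) = DH (Pi.single i 1, 0) := by
    rw [pdq, hDHdef]
  -- derivative of the inverse time change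
  have htt' : HasDerivAt tt lam⁻¹ (τ t0) := by
    have hcd : ContDiffAt ℝ (⊤ : ℕ∞) τ t0 := hτsmooth.contDiffAt (hIopen.mem_nhds ht0)
    have hsd : HasStrictDerivAt τ (deriv τ t0) t0 := hcd.hasStrictDerivAt (by simp)
    rw [(hτ' t0 ht0).deriv, ← hlamdef] at hsd
    have hev : ∀ᶠ x in nhds t0, tt (τ x) = x :=
      (hIopen.eventually_mem ht0).mono fun x hx => htt x hx
    exact (hsd.to_local_left_inverse hlamne hev).hasDerivAt
  -- curve derivatives
  have hs' : ∀ j, HasDerivAt (fun t' => s t' j) (pdp r H j (s t0, p t0)) t0 := hsol1 t0 ht0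
  have hsvec' : HasDerivAt s (fun j => pdp r H j (s t0, p t0)) (tt (τ t0)) := by
    rw [htt0]; exact hasDerivAt_pi.2 hs'
  have hscurve : HasDerivAt (fun u' => s (tt u'))
      (lam⁻¹ • fun j => pdp r H j (s t0, p t0)) (τ t0) := hsvec'.scomp (τ t0) htt'
  have hDσ' : HasFDerivAt σ Dσ (s (tt (τ t0))) := by rw [htt0]; exact hDσ
  have hσcurve : HasDerivAt (fun u' => σ (s (tt u')))
      (Dσ (lam⁻¹ • fun j => pdp r H j (s t0, p t0))) (τ t0) :=
    hDσ'.comp_hasDerivAt (τ t0) hscurve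
  rw [map_smul, smul_eq_mul] at hσcurve
  have hexpcurve : HasDerivAt (fun u' => Real.exp (σ (s (tt u')) / ((r:ℝ) - 1)))
      (Real.exp (σ (s (tt (τ t0))) / ((r:ℝ) - 1)) *
        (lam⁻¹ * Dσ (fun j => pdp r H j (s t0, p t0)) / ((r:ℝ) - 1))) (τ t0) :=
    (hσcurve.div_const _).exp
  rw [htt0, ← hlamdef] at hexpcurve
  have hp0 : HasDerivAt (fun t' => p t' i)
      (- pdq r H i (s t0, p t0)
        - ∑ j, ∑ k, C i j k (s t0) * p t0 k * pdp r H j (s t0, p t0)) (tt (τ t0)) := by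
    rw [htt0]; exact hsol2 t0 ht0 i
  have hpcurve : HasDerivAt (fun u' => p (tt u') i)
      ((- pdq r H i (s t0, p t0)
        - ∑ j, ∑ k, C i j k (s t0) * p t0 k * pdp r H j (s t0, p t0)) * lam⁻¹) (τ t0) :=
    hp0.comp (τ t0) htt'
  have hmul := hexpcurve.mul hpcurve
  rw [htt0, ← hlamdef] at hmul
  -- derivative of the new Hamiltonian at the transformed point
  set De : (Fin r → ℝ) →L[ℝ] ℝ := (est * -(((r:ℝ) - 1)⁻¹)) • Dσ with hDedef
  have hDe : HasFDerivAt (fun s' => Real.exp (-σ s' / ((r:ℝ) - 1))) De (s t0) := by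
    have h1 : HasFDerivAt (fun s' => -σ s' / ((r:ℝ) - 1)) ((-((r:ℝ) - 1)⁻¹) • Dσ) (s t0) := by
      have h := hDσ.const_smul (-((r:ℝ) - 1)⁻¹)
      have heq : (fun s' => -σ s' / ((r:ℝ) - 1)) = (fun s' => (-((r:ℝ) - 1)⁻¹) • σ s') :=
        funext fun s' => by simp only [smul_eq_mul]; ring
      rw [heq]; exact h
    have h2 := h1.exp
    rw [hDedef]
    rw [smul_smul] at h2
    exact h2
  set L : ((Fin r → ℝ) × (Fin r → ℝ)) →L[ℝ] ((Fin r → ℝ) × (Fin r → ℝ)) :=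
    (ContinuousLinearMap.fst ℝ (Fin r → ℝ) (Fin r → ℝ)).prod
      (est • ContinuousLinearMap.snd ℝ (Fin r → ℝ) (Fin r → ℝ)
        + (De.comp (ContinuousLinearMap.fst ℝ (Fin r → ℝ) (Fin r → ℝ))).smulRight
            (lam • p t0)) with hLdef
  have hHtD : HasFDerivAt Ht (DH.comp L) (s t0, lam • p t0) := by
    have hc : HasFDerivAt (fun x : (Fin r → ℝ) × (Fin r → ℝ) =>
        Real.exp (-σ x.1 / ((r:ℝ) - 1)))
        (De.comp (ContinuousLinearMap.fst ℝ (Fin r → ℝ) (Fin r → ℝ))) (s t0, lam • p t0) :=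
      by
        have h := hDe.comp ((s t0, lam • p t0) : (Fin r → ℝ) × (Fin r → ℝ))
          (hasFDerivAt_fst (𝕜 := ℝ) (p := ((s t0, lam • p t0) : (Fin r → ℝ) × (Fin r → ℝ))))
        exact h
    have h2 := hc.smul (hasFDerivAt_snd (𝕜 := ℝ) (p := ((s t0, lam • p t0) :
      (Fin r → ℝ) × (Fin r → ℝ))))
    have hΦ : HasFDerivAt (fun x : (Fin r → ℝ) × (Fin r → ℝ) =>
        (x.1, Real.exp (-σ x.1 / ((r:ℝ) - 1)) • x.2)) L (s t0, lam • p t0) := by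
      rw [hLdef]
      exact hasFDerivAt_fst.prodMk h2
    have hsm : Real.exp (-σ (s t0) / ((r:ℝ) - 1)) • (lam • p t0) = p t0 := by
      rw [smul_smul, ← hestdef, hprod, one_smul]
    have hH2 : HasFDerivAt H DH ((fun x : (Fin r → ℝ) × (Fin r → ℝ) =>
        (x.1, Real.exp (-σ x.1 / ((r:ℝ) - 1)) • x.2)) (s t0, lam • p t0)) := by
      show HasFDerivAt H DH (s t0, Real.exp (-σ (s t0) / ((r:ℝ) - 1)) • (lam • p t0))
      rw [hsm]; exact hDH
    have hcomp := hH2.comp (s t0, lam • p t0) hΦ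
    have hHt2 : Ht = H ∘ (fun x : (Fin r → ℝ) × (Fin r → ℝ) =>
        (x.1, Real.exp (-σ x.1 / ((r:ℝ) - 1)) • x.2)) := funext fun x => by rw [hHt]; rfl
    rw [hHt2]; exact hcomp
  have happ : ∀ v : (Fin r → ℝ) × (Fin r → ℝ),
      L v = (v.1, est • v.2 + ((est * -(((r:ℝ) - 1)⁻¹)) * Dσ v.1) • (lam • p t0)) := by
    intro v
    rw [hLdef, hDedef]
    simp [ContinuousLinearMap.prod_apply, ContinuousLinearMap.add_apply,
      ContinuousLinearMap.smul_apply, ContinuousLinearMap.comp_apply,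
      ContinuousLinearMap.smulRight_apply, ContinuousLinearMap.coe_fst',
      ContinuousLinearMap.coe_snd', smul_eq_mul]
  have hpdpHt : ∀ j, pdp r Ht j (s t0, lam • p t0) = est * pdp r H j (s t0, p t0) := by
    intro j
    have hL1 : L ((0 : Fin r → ℝ), (Pi.single j 1 : Fin r → ℝ))
        = ((0 : Fin r → ℝ), est • (Pi.single j 1 : Fin r → ℝ)) := by
      rw [happ]; simp
    rw [pdp, hHtD.fderiv, ContinuousLinearMap.comp_apply, hL1]
    rw [show ((0 : Fin r → ℝ), est • (Pi.single j 1 : Fin r → ℝ))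
        = est • (((0 : Fin r → ℝ), (Pi.single j 1 : Fin r → ℝ))
          : (Fin r → ℝ) × (Fin r → ℝ)) from by
      rw [Prod.smul_mk, smul_zero]]
    rw [map_smul, smul_eq_mul, hpdpH j]
  have hDH0p : DH ((0 : Fin r → ℝ), p t0) = ∑ j, p t0 j * pdp r H j (s t0, p t0) := by
    have hps : (((0 : Fin r → ℝ), p t0) : (Fin r → ℝ) × (Fin r → ℝ))
        = ∑ j, (p t0 j) • (((0 : Fin r → ℝ), (Pi.single j 1 : Fin r → ℝ))) := by
      apply Prod.ext
      · simp [Prod.fst_sum]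
      · simp only [Prod.snd_sum, Prod.smul_mk]
        exact pi_single_sum (p t0)
    rw [hps, map_sum]
    exact Finset.sum_congr rfl fun j _ => by rw [map_smul, smul_eq_mul, hpdpH j]
  have hpdqHt : pdq r Ht i (s t0, lam • p t0)
      = pdq r H i (s t0, p t0)
        + (-(((r:ℝ) - 1)⁻¹) * pdS r σ i (s t0)) * (∑ j, p t0 j * pdp r H j (s t0, p t0)) := by
    have hL2 : L ((Pi.single i 1 : Fin r → ℝ), (0 : Fin r → ℝ))
        = ((Pi.single i 1 : Fin r → ℝ),
            ((est * -(((r:ℝ) - 1)⁻¹)) * Dσ (Pi.single i 1)) • (lam • p t0)) := by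
      rw [happ]; simp
    rw [pdq, hHtD.fderiv, ContinuousLinearMap.comp_apply, hL2]
    have hsplit : ((Pi.single i 1 : Fin r → ℝ),
        ((est * -(((r:ℝ) - 1)⁻¹)) * Dσ (Pi.single i 1)) • (lam • p t0))
        = ((Pi.single i 1 : Fin r → ℝ), (0 : Fin r → ℝ))
          + (((est * -(((r:ℝ) - 1)⁻¹)) * Dσ (Pi.single i 1)) * lam)
              • (((0 : Fin r → ℝ), p t0) : (Fin r → ℝ) × (Fin r → ℝ)) := by
      apply Prod.ext <;> simp [smul_smul, mul_assoc]
    rw [hsplit, map_add, map_smul, smul_eq_mul, hDH0p, ← hpdqH, hpdS i]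
    have hcollapse : (est * -(((r:ℝ) - 1)⁻¹)) * Dσ (Pi.single i 1) * lam
        = -(((r:ℝ) - 1)⁻¹) * Dσ (Pi.single i 1) := by
      linear_combination (-(((r:ℝ) - 1)⁻¹) * Dσ (Pi.single i 1)) * hprod
    rw [hcollapse]
  have hptv : pt (τ t0) = lam • p t0 := funext fun j => by
    rw [hpt, htt0, ← hlamdef]; rfl
  -- hypothesis (H) structure constants
  have h0r : 0 < r := by omega
  have h1r : 1 < r := by omega
  set other : Fin r → Fin r :=
    fun k => if k = (⟨0, h0r⟩ : Fin r) then (⟨1, h1r⟩ : Fin r) else ⟨0, h0r⟩ with hotherdef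
  have hother : ∀ k, other k ≠ k := by
    intro k
    rcases eq_or_ne k (⟨0, h0r⟩ : Fin r) with rfl | h
    · simp [hotherdef]
    · simp only [hotherdef, if_neg h]
      exact fun hh => h hh.symm
  set c : Fin r → ℝ := fun k => C k (other k) (other k) (s t0) with hcdef
  have hCzero : ∀ k j, C k k j (s t0) = 0 := fun k j => by
    have := hCskew k k j (s t0); linarith
  have hCc : ∀ k j, j ≠ k → C k j j (s t0) = c k := fun k j hjk =>
    hHyp2 (s t0) hmemS k j (other k) hjk (hother k)
  have hβ : ∀ k, pdS r σ k (s t0) = -(((r:ℝ) - 1) * c k) := by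
    intro k
    rw [hσeq k (s t0) hmemS]
    have h1 : ∀ j : Fin r, C k j j (s t0) = (if j = k then 0 else c k) := by
      intro j
      rcases eq_or_ne j k with rfl | h
      · simp [hCzero j j]
      · simp [h, hCc k j h]
    rw [Finset.sum_congr rfl fun j _ => h1 j]
    have hsum : (∑ j : Fin r, if j = k then (0:ℝ) else c k) = (r:ℝ) * c k - c k := by
      rw [show (fun j : Fin r => if j = k then (0:ℝ) else c k)
          = fun j => c k - (if j = k then c k else 0) from
        funext fun j => by
          rcases eq_or_ne j k with rfl | h
          · simp
          · simp [h]]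
      rw [Finset.sum_sub_distrib, Finset.sum_const,
        Finset.sum_ite_eq' Finset.univ k fun _ => c k]
      simp [Finset.card_univ, mul_comm]
    rw [hsum]; ring
  have hinner : ∀ j, (∑ k, C i j k (s t0) * p t0 k)
      = (if j = i then 0 else c i * p t0 j - c j * p t0 i) := by
    intro j
    rcases eq_or_ne j i with rfl | hji
    · rw [if_pos rfl]
      exact Finset.sum_eq_zero fun k _ => by rw [hCzero j k, zero_mul]
    · rw [if_neg hji]
      have h1 : ∀ k : Fin r, C i j k (s t0) * p t0 k
          = (if k = j then c i * p t0 k else 0) + (if k = i then -c j * p t0 k else 0) := by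
        intro k
        by_cases hkj : k = j
        · rw [hkj, if_pos rfl, if_neg hji, add_zero, hCc i j hji]
        · by_cases hki : k = i
          · rw [hki, if_neg (Ne.symm hji), if_pos rfl, zero_add]
            have hv : C i j i (s t0) = - c j := by
              rw [hCskew i j i (s t0),
                hHyp2 (s t0) hmemS j i (other j) (Ne.symm hji) (hother j)]
            rw [hv]
          · rw [if_neg hkj, if_neg hki,
              hHyp1 (s t0) hmemS i j k (Ne.symm hji) (fun h => hkj h.symm)
                (fun h => hki h.symm), zero_mul]
            norm_num
      rw [Finset.sum_congr rfl fun k _ => h1 k, Finset.sum_add_distrib,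
        Finset.sum_ite_eq' Finset.univ j (fun k => c i * p t0 k),
        Finset.sum_ite_eq' Finset.univ i (fun k => -c j * p t0 k)]
      simp only [Finset.mem_univ, if_true]
      ring
  have hSD : (∑ j, ∑ k, C i j k (s t0) * p t0 k * pdp r H j (s t0, p t0))
      = ∑ j, (if j = i then 0 else c i * p t0 j - c j * p t0 i) * pdp r H j (s t0, p t0) := by
    refine Finset.sum_congr rfl fun j _ => ?_
    rw [← Finset.sum_mul, hinner j]
  have hDσA : Dσ (fun j => pdp r H j (s t0, p t0))
      = ∑ k, pdp r H k (s t0, p t0) * pdS r σ k (s t0) := by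
    rw [pi_single_sum (fun j => pdp r H j (s t0, p t0)), map_sum]
    exact Finset.sum_congr rfl fun k _ => by rw [map_smul, smul_eq_mul, hpdS k]
  constructor
  · -- position equations
    have h3 : HasDerivAt (fun t' => s t' i) (pdp r H i (s t0, p t0)) (tt (τ t0)) := by
      rw [htt0]; exact hs' i
    have h2 : HasDerivAt (fun u' => s (tt u') i) (pdp r H i (s t0, p t0) * lam⁻¹) (τ t0) :=
      h3.comp (τ t0) htt'
    simp only [hst]
    rw [htt0, hptv]
    have heq1 : pdp r H i (s t0, p t0) * lam⁻¹ = pdp r Ht i (s t0, lam • p t0) := by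
      rw [hpdpHt i, hestinv]; ring
    exact heq1 ▸ h2
  · -- momentum equations
    simp only [hpt, hst]
    rw [htt0, hptv]
    have heq2 : lam * (lam⁻¹ * Dσ (fun j => pdp r H j (s t0, p t0)) / ((r:ℝ) - 1)) * p t0 i
        + lam * ((- pdq r H i (s t0, p t0)
            - ∑ j, ∑ k, C i j k (s t0) * p t0 k * pdp r H j (s t0, p t0)) * lam⁻¹)
        = - pdq r Ht i (s t0, lam • p t0) := by
      rw [hpdqHt, hDσA, hSD, hβ i]
      simp only [hβ]
      have key := chap_sum_identity ((r:ℝ) - 1) hd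
        (fun k => pdp r H k (s t0, p t0)) c (p t0) i
      linear_combination key
        + ((∑ k, pdp r H k (s t0, p t0) * -(((r:ℝ) - 1) * c k)) / ((r:ℝ) - 1) * p t0 i
            - pdq r H i (s t0, p t0)
            - (∑ j, (if j = i then 0 else c i * p t0 j - c j * p t0 i)
                * pdp r H j (s t0, p t0)))
          * hinv
    exact heq2 ▸ hmul
end
end

section
/- (Reduced kinetic-energy metric of the rubber-rolling body.) For every s ∈ ℝ^{n−1} and all indices 1 ≤ k, l ≤ n−1, the following identity holds: (1/R²) ( I(e_k ∧ e_n), e_l ∧ e_n )_κ + m ⟨ e_k − (1/R)(e_k ∧ e_n) s̃ , e_l − (1/R)(e_l ∧ e_n) s̃ ⟩ = (1/R²) ( J_{kl} + m s_k s_l + (J_{nn} + m a²) δ_{kl} ), where ⟨·,·⟩ is the Euclidean inner product on ℝ^n and δ_{kl} the Kronecker delta. (The left-hand side is the entry K_{kl}(s) of the reduced kinetic-energy metric of the Chaplygin system.) -/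
noncomputable section

/-- `u ∧ v := u vᵀ − v uᵀ`, a skew-symmetric `n × n` matrix. -/
def wedge {n : ℕ} (u v : Fin n → ℝ) : Matrix (Fin n) (Fin n) ℝ :=
  Matrix.vecMulVec u v - Matrix.vecMulVec v u

/-- Killing pairing `(ξ, η)_κ := −(1/2) tr(ξη)`. -/
def killing {n : ℕ} (ξ η : Matrix (Fin n) (Fin n) ℝ) : ℝ :=
  -(1/2) * Matrix.trace (ξ * η)

/-- Inertia operator `I(Ω) := JΩ + ΩJ` associated with the mass tensor `J`. -/
def inertia {n : ℕ} (J Ω : Matrix (Fin n) (Fin n) ℝ) : Matrix (Fin n) (Fin n) ℝ :=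
  J * Ω + Ω * J

/-- Euclidean inner product on `ℝ^n`. -/
def edot {n : ℕ} (u v : Fin n → ℝ) : ℝ := ∑ μ, u μ * v μ

/-! For orthonormal `e_k, e_l, e_n` with `k, l ≠ n`, one has
`(e_k ∧ e_n)(e_l ∧ e_n) = -(e_k e_lᵀ + δ_kl e_n e_nᵀ)`, and for symmetric `J` and skew `Ω, η` the
pairing `(I(Ω), η)_κ` equals `-tr(JΩη)`; together they give `J_kl + δ_kl J_nn`. On the translational
side, `(e_k ∧ e_n) s̃ = (R + a) e_k - s_k e_n`, so `e_k - (1/R)(e_k ∧ e_n) s̃ = -(a/R) e_k + (s_k/R) e_n`,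
and the inner products of these vectors are `(a² δ_kl + s_k s_l) / R²`. -/

open Matrix

section

variable {n : ℕ}

lemma edot_eq_dotProduct (u v : Fin n → ℝ) : edot u v = u ⬝ᵥ v := rfl

lemma wedge_transpose (u v : Fin n → ℝ) : (wedge u v)ᵀ = -wedge u v := by
  simp [wedge, transpose_sub]

lemma wedge_mulVec (u v w : Fin n → ℝ) :
    wedge u v *ᵥ w = (v ⬝ᵥ w) • u - (u ⬝ᵥ w) • v := by
  simp [wedge, sub_mulVec, vecMulVec_mulVec]

lemma wedge_mul_wedge (u v w : Fin n → ℝ) :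
    wedge u v * wedge w v = (v ⬝ᵥ w) • vecMulVec u v - (v ⬝ᵥ v) • vecMulVec u w
      - (u ⬝ᵥ w) • vecMulVec v v + (u ⬝ᵥ v) • vecMulVec v w := by
  simp only [wedge, sub_mul, mul_sub, vecMulVec_mul_vecMulVec, vecMulVec_smul]
  abel

lemma wedge_single_mul_wedge_single {i j k : Fin n} (hi : i ≠ j) (hk : k ≠ j) :
    wedge (Pi.single i 1) (Pi.single j 1) * wedge (Pi.single k 1) (Pi.single j 1)
      = -(vecMulVec (Pi.single i 1) (Pi.single k 1)
          + (if i = k then 1 else 0 : ℝ) • vecMulVec (Pi.single j 1) (Pi.single j 1)) := by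
  rw [wedge_mul_wedge]
  simp only [single_one_dotProduct, Pi.single_eq_same, Pi.single_eq_of_ne hi,
    Pi.single_eq_of_ne hk.symm, Pi.single_apply, zero_smul, one_smul, add_zero]
  split_ifs <;> abel

lemma killing_inertia_eq_neg_trace {J Ω η : Matrix (Fin n) (Fin n) ℝ} (hJ : Jᵀ = J)
    (hΩ : Ωᵀ = -Ω) (hη : ηᵀ = -η) :
    killing (inertia J Ω) η = -trace (J * (Ω * η)) := by
  have hcyc : trace (Ω * J * η) = trace (J * (Ω * η)) :=
    calc trace (Ω * J * η) = trace ((Ω * J * η)ᵀ) := (trace_transpose _).symm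
    _ = trace (η * (J * Ω)) := by simp [transpose_mul, hJ, hΩ, hη, Matrix.mul_assoc]
    _ = trace (J * (Ω * η)) := by rw [trace_mul_comm, Matrix.mul_assoc]
  rw [killing, inertia, add_mul, trace_add, hcyc, Matrix.mul_assoc]
  ring

lemma trace_mul_vecMulVec_single (J : Matrix (Fin n) (Fin n) ℝ) (i k : Fin n) :
    trace (J * vecMulVec (Pi.single i 1) (Pi.single k 1)) = J k i := by
  rw [mul_vecMulVec, trace_vecMulVec, mulVec_single_one, dotProduct_single_one, col_apply]

lemma killing_inertia_wedge_single {J : Matrix (Fin n) (Fin n) ℝ} (hJ : J.IsSymm)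
    {i j k : Fin n} (hi : i ≠ j) (hk : k ≠ j) :
    killing (inertia J (wedge (Pi.single i 1) (Pi.single j 1)))
        (wedge (Pi.single k 1) (Pi.single j 1))
      = J i k + J j j * if i = k then 1 else 0 := by
  rw [killing_inertia_eq_neg_trace hJ (wedge_transpose _ _) (wedge_transpose _ _),
    wedge_single_mul_wedge_single hi hk, Matrix.mul_neg, trace_neg, neg_neg, Matrix.mul_add,
    Matrix.mul_smul, trace_add, trace_smul, trace_mul_vecMulVec_single,
    trace_mul_vecMulVec_single, hJ.apply i k, smul_eq_mul, mul_comm]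

lemma single_sub_smul_wedge_mulVec (i j : Fin n) (c : ℝ) (w : Fin n → ℝ) :
    Pi.single i 1 - c • wedge (Pi.single i 1) (Pi.single j 1) *ᵥ w
      = (1 - c * w j) • Pi.single i 1 + (c * w i) • Pi.single j 1 := by
  rw [wedge_mulVec, single_one_dotProduct, single_one_dotProduct]
  module

lemma dotProduct_smul_single_add_smul_single {i j k : Fin n} (hi : i ≠ j) (hk : k ≠ j)
    (α β γ δ : ℝ) :
    (α • Pi.single i 1 + β • Pi.single j 1) ⬝ᵥ (γ • Pi.single k 1 + δ • Pi.single j 1)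
      = α * γ * (if i = k then 1 else 0) + β * δ := by
  simp only [add_dotProduct, dotProduct_add, smul_dotProduct, dotProduct_smul,
    single_one_dotProduct, Pi.single_eq_same, Pi.single_eq_of_ne hi, Pi.single_eq_of_ne hk.symm,
    Pi.single_apply, smul_eq_mul]
  split_ifs <;> ring

end

theorem reduced_metric_of_rubber_rolling_body_general
    (d : ℕ)
    (J : Matrix (Fin (d+1)) (Fin (d+1)) ℝ) (hJsym : J.IsSymm)
    (m R a : ℝ) (hR : 0 < R)
    (s : Fin d → ℝ) (k l : Fin d) :
    (1/R^2) * killing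
        (inertia J (wedge (Pi.single k.castSucc 1) (Pi.single (Fin.last d) 1)))
        (wedge (Pi.single l.castSucc 1) (Pi.single (Fin.last d) 1))
      + m * edot
          (Pi.single k.castSucc 1 -
            (1/R) • (wedge (Pi.single k.castSucc 1) (Pi.single (Fin.last d) 1)).mulVec
              (Fin.snoc s (R + a)))
          (Pi.single l.castSucc 1 -
            (1/R) • (wedge (Pi.single l.castSucc 1) (Pi.single (Fin.last d) 1)).mulVec
              (Fin.snoc s (R + a)))
    = (1/R^2) * (J k.castSucc l.castSucc + m * s k * s l
        + (J (Fin.last d) (Fin.last d) + m * a^2) * (if k = l then 1 else 0)) := by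
  have hk := (Fin.castSucc_lt_last k).ne
  have hl := (Fin.castSucc_lt_last l).ne
  rw [edot_eq_dotProduct, killing_inertia_wedge_single hJsym hk hl, single_sub_smul_wedge_mulVec,
    single_sub_smul_wedge_mulVec, dotProduct_smul_single_add_smul_single hk hl]
  simp only [Fin.snoc_castSucc, Fin.snoc_last, Fin.castSucc_inj]
  field_simp
  split_ifs <;> ring

/-- reduced kinetic-energy metric of the rubber-rolling body.  Here the
ambient dimension is `n = d + 1 ≥ 3` (so `d = n − 1 ≥ 2`), `e_k` for `k ≤ n − 1` is
`Pi.single k.castSucc 1`, `e_n = Pi.single (Fin.last d) 1`, and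
`s̃ = (s, R + a) = Fin.snoc s (R + a)`. -/
theorem reduced_metric_of_rubber_rolling_body
    (d : ℕ) (hd : 2 ≤ d)
    (J : Matrix (Fin (d+1)) (Fin (d+1)) ℝ) (hJsym : J.IsSymm) (hJpos : J.PosDef)
    (m R a : ℝ) (hm : 0 < m) (hR : 0 < R)
    (s : Fin d → ℝ) (k l : Fin d) :
    (1/R^2) * killing
        (inertia J (wedge (Pi.single k.castSucc 1) (Pi.single (Fin.last d) 1)))
        (wedge (Pi.single l.castSucc 1) (Pi.single (Fin.last d) 1))
      + m * edot
          (Pi.single k.castSucc 1 -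
            (1/R) • (wedge (Pi.single k.castSucc 1) (Pi.single (Fin.last d) 1)).mulVec
              (Fin.snoc s (R + a)))
          (Pi.single l.castSucc 1 -
            (1/R) • (wedge (Pi.single l.castSucc 1) (Pi.single (Fin.last d) 1)).mulVec
              (Fin.snoc s (R + a)))
    = (1/R^2) * (J k.castSucc l.castSucc + m * s k * s l
        + (J (Fin.last d) (Fin.last d) + m * a^2) * (if k = l then 1 else 0)) :=
  reduced_metric_of_rubber_rolling_body_general d J hJsym m R a hR s k l
end
end

section
/- (Gyroscopic coefficients in the axially symmetric case C2.) Let n ≥ 3, m, R, J₁, J_n > 0, a ∈ ℝ, and set c := m a / (R (J₁ + J_n + m a²)). Define for s ∈ ℝ^{n−1}: K_{kl}(s) := (1/R²) ( (J₁ + J_n + m a²) δ_{kl} + m s_k s_l ) and C_{ij}^k(s) := −c ( s_i δ_j^k − s_j δ_i^k ), for 1 ≤ i, j, k, l ≤ n−1. Then for every s ∈ ℝ^{n−1} and all 1 ≤ i, j, l ≤ n−1: Σ_{k=1}^{n−1} K_{kl}(s) C_{ij}^k(s) = (m a / R³) ( s_j δ_{il} − s_i δ_{jl} ). (Since the matrix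 (K_{kl}(s)) is invertible, this identifies C_{ij}^k as the gyroscopic coefficients of the reduced system, determined by equation C_{ij}^k = Σ_l K^{kl} ⟨[hor(∂/∂s_i), hor(∂/∂s_j)], hor(∂/∂s_l)⟩.) -/
/-!
Contracting `C_{ij}^k = -c (s_i δ_j^k - s_j δ_i^k)` against `K_{kl}` gives
`-c (s_i K_{jl} - s_j K_{il})`. In this antisymmetric combination the rank-one part
`m s_k s_l / R²` of `K` cancels, leaving only its scalar part `(J₁ + J_n + m a²) / R²`,
which is exactly the factor `c` was chosen to cancel.
-/

section Contraction

variable {ι 𝕜 : Type*} [DecidableEq ι] [CommRing 𝕜]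

theorem antisymm_sub_of_scalar_add_rankOne (α β : 𝕜) (s : ι → 𝕜) (i j l : ι) :
    s i * (α * (if j = l then 1 else 0) + β * s j * s l)
        - s j * (α * (if i = l then 1 else 0) + β * s i * s l)
      = α * (s i * (if j = l then 1 else 0) - s j * (if i = l then 1 else 0)) := by
  ring

variable [Fintype ι]

theorem sum_mul_antisymm_delta (K : ι → ι → 𝕜) (s : ι → 𝕜) (i j l : ι) :
    ∑ k, K k l * (s i * (if j = k then 1 else 0) - s j * (if i = k then 1 else 0))
      = s i * K j l - s j * K i l := by
  simp only [mul_sub, Finset.sum_sub_distrib, mul_ite, mul_one, mul_zero,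
    Finset.sum_ite_eq, Finset.mem_univ, if_true]
  ring

end Contraction

theorem gyroscopic_coefficients_axially_symmetric_general
    (n : ℕ)
    (m R J₁ Jn a c : ℝ) (hm : 0 < m) (hR : 0 < R) (hJ₁ : 0 < J₁) (hJn : 0 < Jn)
    (hc : c = m * a / (R * (J₁ + Jn + m * a^2)))
    (K : (Fin (n-1) → ℝ) → Fin (n-1) → Fin (n-1) → ℝ)
    (hK : ∀ s k l, K s k l =
      (1/R^2) * ((J₁ + Jn + m * a^2) * (if k = l then 1 else 0) + m * s k * s l))
    (C : Fin (n-1) → Fin (n-1) → Fin (n-1) → (Fin (n-1) → ℝ) → ℝ)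
    (hC : ∀ i j k s, C i j k s =
      -c * (s i * (if j = k then 1 else 0) - s j * (if i = k then 1 else 0))) :
    ∀ (s : Fin (n-1) → ℝ) (i j l : Fin (n-1)),
      (∑ k, K s k l * C i j k s)
        = (m * a / R^3) *
            (s j * (if i = l then 1 else 0) - s i * (if j = l then 1 else 0)) := by
  intro s i j l
  have hA : J₁ + Jn + m * a^2 ≠ 0 := by positivity
  calc ∑ k, K s k l * C i j k s
      = -c * (s i * K s j l - s j * K s i l) := by
        simp_rw [hC, mul_left_comm _ (-c), ← Finset.mul_sum, sum_mul_antisymm_delta]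
    _ = -c / R^2 * (s i * ((J₁ + Jn + m * a^2) * (if j = l then 1 else 0) + m * s j * s l)
          - s j * ((J₁ + Jn + m * a^2) * (if i = l then 1 else 0) + m * s i * s l)) := by
        rw [hK, hK]; ring
    _ = _ := by
        rw [antisymm_sub_of_scalar_add_rankOne, hc]
        field_simp
        ring

/-- gyroscopic coefficients in the axially symmetric case C2.  With
`c = m a / (R (J₁ + J_n + m a²))`, the reduced metric
`K_{kl}(s) = (1/R²)((J₁+J_n+ma²) δ_{kl} + m s_k s_l)` and the coefficients
`C_{ij}^k(s) = −c (s_i δ_j^k − s_j δ_i^k)` satisfy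
`Σ_k K_{kl}(s) C_{ij}^k(s) = (m a / R³)(s_j δ_{il} − s_i δ_{jl})`. -/
theorem gyroscopic_coefficients_axially_symmetric
    (n : ℕ) (hn : 3 ≤ n)
    (m R J₁ Jn a c : ℝ) (hm : 0 < m) (hR : 0 < R) (hJ₁ : 0 < J₁) (hJn : 0 < Jn)
    (hc : c = m * a / (R * (J₁ + Jn + m * a^2)))
    (K : (Fin (n-1) → ℝ) → Fin (n-1) → Fin (n-1) → ℝ)
    (hK : ∀ s k l, K s k l =
      (1/R^2) * ((J₁ + Jn + m * a^2) * (if k = l then 1 else 0) + m * s k * s l))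
    (C : Fin (n-1) → Fin (n-1) → Fin (n-1) → (Fin (n-1) → ℝ) → ℝ)
    (hC : ∀ i j k s, C i j k s =
      -c * (s i * (if j = k then 1 else 0) - s j * (if i = k then 1 else 0))) :
    ∀ (s : Fin (n-1) → ℝ) (i j l : Fin (n-1)),
      (∑ k, K s k l * C i j k s)
        = (m * a / R^3) *
            (s j * (if i = l then 1 else 0) - s i * (if j = l then 1 else 0)) :=
  gyroscopic_coefficients_axially_symmetric_general n m R J₁ Jn a c hm hR hJ₁ hJn hc K hK C hC
end

section
/- (Explicit Chaplygin Hamiltonisation of the multidimensional rubber-rolling symmetric body.) Let n ≥ 3, r := n−1, m, R, J₁, J_n > 0, a ∈ ℝ, and c := m a / (R (J₁ + J_n + m a²)). On ℝ^{n−1} define K_{kl}(s) := (1/R²)((J₁ + J_n + m a²) δ_{kl} + m s_k s_l), write K^{ij}(s) for the entries of the inverse matrix, set H(s,p) := (1/2) Σ_{i,j} K^{ij}(s) p_i p_j, and define C_{ij}^k(s) := −c ( s_i δ_j^k − s_j δ_i^k ). Let (s, p) : I → ℝ^{n−1} × ℝ^{n−1} be any solution of the reduced equations ds^i/dt = ∂H/∂p_i,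 dp_i/dt = −∂H/∂s^i − Σ_{j,k} C_{ij}^k p_k ∂H/∂p_j on an open interval I. Let τ : I → ℝ be smooth and strictly increasing with τ'(t) = exp( (c/2) Σ_{i=1}^{n−1} s_i(t)² ), with inverse t(·) defined on J = τ(I). Define s̃(u) := s(t(u)) and p̃_i(u) := exp( (c/2) Σ_j s_j(t(u))² ) p_i(t(u)). Then (s̃, p̃) solves Hamilton's canonical equations ds̃^i/du = ∂H̃/∂p̃_i, dp̃_i/du = −∂H̃/∂s^i on J, where H̃(s, p̃) := H( s, exp( −(c/2) Σ_j s_j² ) p̃ ). Moreover, the reduced equations preserve the measure exp( ((n−2) c / 2) Σ_i s_i² ) ds dp, i.e. the divergence of exp( ((n−2) c / 2) Σ_i s_i² ) X vanishes identically, where X is the vector field of the reduced equations. -/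
noncomputable section

namespace Rub

variable {r : ℕ}

abbrev E (r : ℕ) := (Fin r → ℝ) × (Fin r → ℝ)

def Qf (x : E r) : ℝ := ∑ i, x.1 i ^ 2
def Pf (x : E r) : ℝ := ∑ i, x.2 i ^ 2
def Wf (x : E r) : ℝ := ∑ i, x.1 i * x.2 i

def Hf (A m κ : ℝ) (x : E r) : ℝ := κ * (Pf x - m * Wf x ^ 2 / (A + m * Qf x))

lemma Qf_nonneg (x : E r) : 0 ≤ Qf x := Finset.sum_nonneg fun i _ => sq_nonneg _

lemma Dpos {A m : ℝ} (hA : 0 < A) (hm : 0 ≤ m) (x : E r) : 0 < A + m * Qf x :=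
  add_pos_of_pos_of_nonneg hA (mul_nonneg hm (Qf_nonneg x))

lemma line_sum (u w : Fin r → ℝ) (i : Fin r) (a b ε : ℝ) :
    ∑ j, (u j + ε * (Pi.single i a : Fin r → ℝ) j) * (w j + ε * (Pi.single i b : Fin r → ℝ) j)
      = (∑ j, u j * w j) + ε * (a * w i + b * u i) + ε ^ 2 * (a * b) := by
  have h : ∀ j : Fin r,
      (u j + ε * (Pi.single i a : Fin r → ℝ) j) * (w j + ε * (Pi.single i b : Fin r → ℝ) j)
        = u j * w j + (if j = i then ε * (a * w i + b * u i) + ε ^ 2 * (a * b) else 0) := by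
    intro j
    rcases eq_or_ne j i with h | h
    · subst h; simp [Pi.single_apply]; ring
    · simp [Pi.single_apply, h]
  rw [Finset.sum_congr rfl fun j _ => h j, Finset.sum_add_distrib]
  simp [Finset.sum_ite_eq']
  ring

def vq (r : ℕ) (i : Fin r) : E r := ((Pi.single i 1 : Fin r → ℝ), 0)
def vp (r : ℕ) (i : Fin r) : E r := (0, (Pi.single i 1 : Fin r → ℝ))

lemma fst_line_q (x : E r) (i : Fin r) (ε : ℝ) (j : Fin r) :
    (x + ε • vq r i).1 j = x.1 j + ε * (Pi.single i 1 : Fin r → ℝ) j := by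
  simp [vq, Prod.add_def, Prod.smul_def]
lemma snd_line_q (x : E r) (i : Fin r) (ε : ℝ) (j : Fin r) :
    (x + ε • vq r i).2 j = x.2 j := by
  simp [vq, Prod.add_def, Prod.smul_def]
lemma fst_line_p (x : E r) (i : Fin r) (ε : ℝ) (j : Fin r) :
    (x + ε • vp r i).1 j = x.1 j := by
  simp [vp, Prod.add_def, Prod.smul_def]
lemma snd_line_p (x : E r) (i : Fin r) (ε : ℝ) (j : Fin r) :
    (x + ε • vp r i).2 j = x.2 j + ε * (Pi.single i 1 : Fin r → ℝ) j := by
  simp [vp, Prod.add_def, Prod.smul_def]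

lemma fst_line_q_i (x : E r) (i : Fin r) (ε : ℝ) :
    (x + ε • vq r i).1 i = x.1 i + ε := by simp [fst_line_q]
lemma snd_line_p_i (x : E r) (i : Fin r) (ε : ℝ) :
    (x + ε • vp r i).2 i = x.2 i + ε := by simp [snd_line_p]

lemma Qf_line_q (x : E r) (i : Fin r) (ε : ℝ) :
    Qf (x + ε • vq r i) = Qf x + ε * (2 * x.1 i) + ε ^ 2 := by
  unfold Qf
  simp only [fst_line_q, pow_two]
  rw [line_sum]
  simp only [pow_two]; ring
lemma Pf_line_q (x : E r) (i : Fin r) (ε : ℝ) :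
    Pf (x + ε • vq r i) = Pf x := by
  unfold Pf; simp only [snd_line_q]
lemma Wf_line_q (x : E r) (i : Fin r) (ε : ℝ) :
    Wf (x + ε • vq r i) = Wf x + ε * x.2 i := by
  unfold Wf
  calc ∑ j, (x + ε • vq r i).1 j * (x + ε • vq r i).2 j
      = ∑ j, (x.1 j + ε * (Pi.single i 1 : Fin r → ℝ) j)
          * (x.2 j + ε * (Pi.single i (0:ℝ) : Fin r → ℝ) j) := by
        refine Finset.sum_congr rfl fun j _ => ?_
        rw [fst_line_q, snd_line_q]; simp
    _ = Wf x + ε * x.2 i := by rw [line_sum]; simp [Wf]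
lemma Qf_line_p (x : E r) (i : Fin r) (ε : ℝ) :
    Qf (x + ε • vp r i) = Qf x := by
  unfold Qf; simp only [fst_line_p]
lemma Pf_line_p (x : E r) (i : Fin r) (ε : ℝ) :
    Pf (x + ε • vp r i) = Pf x + ε * (2 * x.2 i) + ε ^ 2 := by
  unfold Pf
  simp only [snd_line_p, pow_two]
  rw [line_sum]
  simp only [pow_two]; ring
lemma Wf_line_p (x : E r) (i : Fin r) (ε : ℝ) :
    Wf (x + ε • vp r i) = Wf x + ε * x.1 i := by
  unfold Wf
  calc ∑ j, (x + ε • vp r i).1 j * (x + ε • vp r i).2 j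
      = ∑ j, (x.1 j + ε * (Pi.single i (0:ℝ) : Fin r → ℝ) j)
          * (x.2 j + ε * (Pi.single i (1:ℝ) : Fin r → ℝ) j) := by
        refine Finset.sum_congr rfl fun j _ => ?_
        rw [fst_line_p, snd_line_p]; simp
    _ = Wf x + ε * x.1 i := by rw [line_sum]; simp [Wf]

lemma diff1 (i : Fin r) (x : E r) : DifferentiableAt ℝ (fun y : E r => y.1 i) x :=
  ((ContinuousLinearMap.proj (R := ℝ) (φ := fun _ : Fin r => ℝ) i).comp
    (ContinuousLinearMap.fst ℝ (Fin r → ℝ) (Fin r → ℝ))).differentiableAt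

lemma diff2 (i : Fin r) (x : E r) : DifferentiableAt ℝ (fun y : E r => y.2 i) x :=
  ((ContinuousLinearMap.proj (R := ℝ) (φ := fun _ : Fin r => ℝ) i).comp
    (ContinuousLinearMap.snd ℝ (Fin r → ℝ) (Fin r → ℝ))).differentiableAt

lemma diffQf (x : E r) : DifferentiableAt ℝ (Qf (r := r)) x :=
  DifferentiableAt.fun_sum fun i _ => (diff1 i x).pow 2
lemma diffPf (x : E r) : DifferentiableAt ℝ (Pf (r := r)) x :=
  DifferentiableAt.fun_sum fun i _ => (diff2 i x).pow 2
lemma diffWf (x : E r) : DifferentiableAt ℝ (Wf (r := r)) x :=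
  DifferentiableAt.fun_sum fun i _ => (diff1 i x).mul (diff2 i x)

lemma diffD {A m : ℝ} (x : E r) :
    DifferentiableAt ℝ (fun y : E r => A + m * Qf y) x :=
  (differentiableAt_const A).add ((differentiableAt_const m).mul (diffQf x))

lemma diffHf {A m κ : ℝ} {x : E r} (hD : A + m * Qf x ≠ 0) :
    DifferentiableAt ℝ (Hf A m κ) x := by
  unfold Hf
  have h1 : DifferentiableAt ℝ (fun y : E r => m * Wf y ^ 2) x :=
    (differentiableAt_const m).mul ((diffWf x).pow 2)
  have h2 : DifferentiableAt ℝ (fun y : E r => m * Wf y ^ 2 / (A + m * Qf y)) x := by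
    simp only [div_eq_mul_inv]
    exact h1.mul ((diffD (A := A) (m := m) x).inv hD)
  exact (differentiableAt_const κ).mul ((diffPf x).sub h2)

lemma pd_eq {f : E r → ℝ} {x v : E r} {d : ℝ}
    (hf : DifferentiableAt ℝ f x)
    (h : HasDerivAt (fun ε : ℝ => f (x + ε • v)) d 0) :
    (fderiv ℝ f x) v = d := by
  have hl : HasDerivAt (fun ε : ℝ => x + ε • v) v 0 := by
    simpa using ((hasDerivAt_id (0 : ℝ)).smul_const v).const_add x
  have hx : x + (0 : ℝ) • v = x := by simp
  have h2 : HasDerivAt (fun ε : ℝ => f (x + ε • v)) (fderiv ℝ f x v) 0 := by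
    have h3 : HasFDerivAt f (fderiv ℝ f x) (x + (0 : ℝ) • v) := by
      rw [hx]; exact hf.hasFDerivAt
    exact h3.comp_hasDerivAt 0 hl
  exact h2.unique h

-- basic 1-D derivative pieces at 0
lemma hD_q {A m : ℝ} (x : E r) (i : Fin r) :
    HasDerivAt (fun ε : ℝ => A + m * (Qf x + ε * (2 * x.1 i) + ε ^ 2)) (m * (2 * x.1 i)) 0 := by
  have h : HasDerivAt (fun ε : ℝ => Qf x + ε * (2 * x.1 i) + ε ^ 2) (2 * x.1 i) 0 := by
    have := (((hasDerivAt_id (0 : ℝ)).mul_const (2 * x.1 i)).const_add (Qf x)).fun_add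
      (hasDerivAt_pow 2 (0 : ℝ))
    simpa using this
  simpa using (h.const_mul m).const_add A

lemma hW_line {a W0 : ℝ} : HasDerivAt (fun ε : ℝ => W0 + ε * a) a 0 := by
  simpa using ((hasDerivAt_id (0 : ℝ)).mul_const a).const_add W0

lemma hQ_line {s2 Q0 : ℝ} :
    HasDerivAt (fun ε : ℝ => Q0 + ε * (2 * s2) + ε ^ 2) (2 * s2) 0 := by
  have := (((hasDerivAt_id (0 : ℝ)).mul_const (2 * s2)).const_add Q0).fun_add
      (hasDerivAt_pow 2 (0 : ℝ))
  simpa using this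

variable {A m κ b c : ℝ}

/-- L1 -/
lemma pdp_Hf (hA : 0 < A) (hm : 0 ≤ m) (i : Fin r) (x : E r) :
    pdp r (Hf A m κ) i x
      = κ * (2 * x.2 i - m * (2 * Wf x * x.1 i) / (A + m * Qf x)) := by
  have hD := (Dpos hA hm x).ne'
  have key : (fun ε : ℝ => Hf A m κ (x + ε • vp r i))
      = fun ε => κ * ((Pf x + ε * (2 * x.2 i) + ε ^ 2)
          - m * (Wf x + ε * x.1 i) ^ 2 / (A + m * Qf x)) := by
    funext ε; unfold Hf
    rw [Pf_line_p, Wf_line_p, Qf_line_p]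
  refine pd_eq (v := vp r i) (diffHf hD) ?_
  rw [key]
  have h := ((hQ_line (s2 := x.2 i) (Q0 := Pf x)).sub
    (((hW_line (a := x.1 i) (W0 := Wf x)).pow 2).const_mul m |>.div_const (A + m * Qf x))).const_mul κ
  refine h.congr_deriv ?_
  norm_num

/-- L2 -/
lemma pdq_Hf (hA : 0 < A) (hm : 0 ≤ m) (i : Fin r) (x : E r) :
    pdq r (Hf A m κ) i x
      = κ * (m ^ 2 * Wf x ^ 2 * (2 * x.1 i) / (A + m * Qf x) ^ 2
          - m * (2 * Wf x * x.2 i) / (A + m * Qf x)) := by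
  have hD := (Dpos hA hm x).ne'
  have hD0 : A + m * (Qf x + 0 * (2 * x.1 i) + 0 ^ 2) ≠ 0 := by simpa using hD
  have key : (fun ε : ℝ => Hf A m κ (x + ε • vq r i))
      = fun ε => κ * (Pf x
          - m * (Wf x + ε * x.2 i) ^ 2 / (A + m * (Qf x + ε * (2 * x.1 i) + ε ^ 2))) := by
    funext ε; unfold Hf
    rw [Pf_line_q, Wf_line_q, Qf_line_q]
  refine pd_eq (v := vq r i) (diffHf hD) ?_
  rw [key]
  have h := ((((hW_line (a := x.2 i) (W0 := Wf x)).pow 2).const_mul m |>.div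
      (hD_q x i) hD0).const_sub (Pf x)).const_mul κ
  refine h.congr_deriv ?_
  norm_num
  field_simp
  ring

lemma hsi_line {a : ℝ} : HasDerivAt (fun ε : ℝ => a + ε) 1 0 := by
  simpa using (hasDerivAt_id (0 : ℝ)).const_add a

lemma diffExpQ (x : E r) : DifferentiableAt ℝ (fun y : E r => Real.exp (b * Qf y)) x :=
  ((diffQf x).const_mul b).exp

/-- L3 -/
lemma pdp_expHf (hA : 0 < A) (hm : 0 ≤ m) (i : Fin r) (x : E r) :
    pdp r (fun y => Real.exp (b * Qf y) * Hf A m κ y) i x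
      = Real.exp (b * Qf x) * (κ * (2 * x.2 i - m * (2 * Wf x * x.1 i) / (A + m * Qf x))) := by
  have hD := (Dpos hA hm x).ne'
  have key : (fun ε : ℝ => Real.exp (b * Qf (x + ε • vp r i)) * Hf A m κ (x + ε • vp r i))
      = fun ε => Real.exp (b * Qf x) * (κ * ((Pf x + ε * (2 * x.2 i) + ε ^ 2)
          - m * (Wf x + ε * x.1 i) ^ 2 / (A + m * Qf x))) := by
    funext ε; unfold Hf
    rw [Pf_line_p, Wf_line_p, Qf_line_p]
  refine pd_eq (v := vp r i) ((diffExpQ x).mul (diffHf hD)) ?_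
  rw [key]
  have h := (((hQ_line (s2 := x.2 i) (Q0 := Pf x)).sub
    (((hW_line (a := x.1 i) (W0 := Wf x)).pow 2).const_mul m
      |>.div_const (A + m * Qf x))).const_mul κ).const_mul (Real.exp (b * Qf x))
  refine h.congr_deriv ?_
  norm_num

/-- L4 -/
lemma pdq_expHf (hA : 0 < A) (hm : 0 ≤ m) (i : Fin r) (x : E r) :
    pdq r (fun y => Real.exp (b * Qf y) * Hf A m κ y) i x
      = Real.exp (b * Qf x) * (b * (2 * x.1 i) * Hf A m κ x
          + κ * (m ^ 2 * Wf x ^ 2 * (2 * x.1 i) / (A + m * Qf x) ^ 2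
              - m * (2 * Wf x * x.2 i) / (A + m * Qf x))) := by
  have hD := (Dpos hA hm x).ne'
  have hD0 : A + m * (Qf x + 0 * (2 * x.1 i) + 0 ^ 2) ≠ 0 := by simpa using hD
  have key : (fun ε : ℝ => Real.exp (b * Qf (x + ε • vq r i)) * Hf A m κ (x + ε • vq r i))
      = fun ε => Real.exp (b * (Qf x + ε * (2 * x.1 i) + ε ^ 2)) * (κ * (Pf x
          - m * (Wf x + ε * x.2 i) ^ 2 / (A + m * (Qf x + ε * (2 * x.1 i) + ε ^ 2)))) := by
    funext ε; unfold Hf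
    rw [Pf_line_q, Wf_line_q, Qf_line_q]
  refine pd_eq (v := vq r i) ((diffExpQ x).mul (diffHf hD)) ?_
  rw [key]
  have h := (((hQ_line (s2 := x.1 i) (Q0 := Qf x)).const_mul b).exp).mul
    (((((hW_line (a := x.2 i) (W0 := Wf x)).pow 2).const_mul m).div
      (hD_q x i) hD0).const_sub (Pf x) |>.const_mul κ)
  refine h.congr_deriv ?_
  unfold Hf
  norm_num
  field_simp
  ring

/-- L5 -/
lemma pdq_field1 (hA : 0 < A) (hm : 0 ≤ m) (i : Fin r) (x : E r) :
    pdq r (fun y => Real.exp (b * Qf y)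
        * (κ * (2 * y.2 i - m * (2 * Wf y * y.1 i) / (A + m * Qf y)))) i x
      = Real.exp (b * Qf x) * ((-(2 * m * κ * Wf x) / (A + m * Qf x))
          + (4 * b * κ - 2 * m * κ / (A + m * Qf x)) * (x.1 i * x.2 i)
          + (-(4 * b * κ * m * Wf x) / (A + m * Qf x)
              + 4 * m ^ 2 * κ * Wf x / (A + m * Qf x) ^ 2) * x.1 i ^ 2) := by
  have hD := (Dpos hA hm x).ne'
  have hD0 : A + m * (Qf x + 0 * (2 * x.1 i) + 0 ^ 2) ≠ 0 := by simpa using hD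
  have hdiff : DifferentiableAt ℝ (fun y : E r => Real.exp (b * Qf y)
      * (κ * (2 * y.2 i - m * (2 * Wf y * y.1 i) / (A + m * Qf y)))) x := by
    simp only [div_eq_mul_inv]
    exact (diffExpQ x).mul ((((((diff2 i x).const_mul 2).sub
      ((((diffWf x).const_mul 2).mul (diff1 i x)).const_mul m |>.mul
        ((diffD (A := A) (m := m) x).inv hD)))).const_mul κ))
  have key : (fun ε : ℝ => Real.exp (b * Qf (x + ε • vq r i))
        * (κ * (2 * (x + ε • vq r i).2 i
            - m * (2 * Wf (x + ε • vq r i) * (x + ε • vq r i).1 i)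
              / (A + m * Qf (x + ε • vq r i)))))
      = fun ε => Real.exp (b * (Qf x + ε * (2 * x.1 i) + ε ^ 2))
          * (κ * (2 * x.2 i - m * (2 * (Wf x + ε * x.2 i) * (x.1 i + ε))
              / (A + m * (Qf x + ε * (2 * x.1 i) + ε ^ 2)))) := by
    funext ε
    rw [Wf_line_q, Qf_line_q, snd_line_q, fst_line_q_i]
  refine pd_eq (v := vq r i) hdiff ?_
  rw [key]
  have h := (((hQ_line (s2 := x.1 i) (Q0 := Qf x)).const_mul b).exp).mul
    (((((hW_line (a := x.2 i) (W0 := Wf x)).const_mul 2).mul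
        (hsi_line (a := x.1 i))).const_mul m |>.div (hD_q x i) hD0).const_sub
      (2 * x.2 i) |>.const_mul κ)
  refine h.congr_deriv ?_
  norm_num
  generalize A + m * Qf x = D at *
  field_simp
  ring

/-- L6 -/
lemma pdp_field2 (hA : 0 < A) (hm : 0 ≤ m) (i : Fin r) (x : E r) :
    pdp r (fun y => Real.exp (b * Qf y)
        * (-(κ * (m ^ 2 * Wf y ^ 2 * (2 * y.1 i) / (A + m * Qf y) ^ 2
              - m * (2 * Wf y * y.2 i) / (A + m * Qf y)))
            + c * (y.1 i * (2 * Hf A m κ y))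
            - c * (y.2 i * (2 * κ * A * Wf y / (A + m * Qf y))))) i x
      = Real.exp (b * Qf x) * ((2 * m * κ * Wf x / (A + m * Qf x)
            - 2 * c * κ * A * Wf x / (A + m * Qf x))
          + (2 * m * κ / (A + m * Qf x) + 4 * c * κ
              - 2 * c * κ * A / (A + m * Qf x)) * (x.1 i * x.2 i)
          + (-(4 * m ^ 2 * κ * Wf x) / (A + m * Qf x) ^ 2
              - 4 * c * κ * m * Wf x / (A + m * Qf x)) * x.1 i ^ 2) := by
  have hD := (Dpos hA hm x).ne'
  have hdiff : DifferentiableAt ℝ (fun y : E r => Real.exp (b * Qf y)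
      * (-(κ * (m ^ 2 * Wf y ^ 2 * (2 * y.1 i) / (A + m * Qf y) ^ 2
            - m * (2 * Wf y * y.2 i) / (A + m * Qf y)))
          + c * (y.1 i * (2 * Hf A m κ y))
          - c * (y.2 i * (2 * κ * A * Wf y / (A + m * Qf y))))) x := by
    have hHfd := diffHf (A := A) (m := m) (κ := κ) (x := x) hD
    simp only [div_eq_mul_inv]
    refine (diffExpQ x).mul ?_
    refine DifferentiableAt.sub (DifferentiableAt.add (DifferentiableAt.neg ?_) ?_) ?_
    · refine DifferentiableAt.const_mul ?_ κ
      refine DifferentiableAt.sub ?_ ?_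
      · exact ((((diffWf x).pow 2).const_mul (m ^ 2)).mul ((diff1 i x).const_mul 2)).mul
          (((diffD (A := A) (m := m) x).pow 2).inv (pow_ne_zero 2 hD))
      · exact ((((diffWf x).const_mul 2).mul (diff2 i x)).const_mul m).mul
          ((diffD (A := A) (m := m) x).inv hD)
    · exact ((diff1 i x).mul (hHfd.const_mul 2)).const_mul c
    · exact (((diff2 i x).mul ((((diffWf x).const_mul (2 * κ * A))).mul
        ((diffD (A := A) (m := m) x).inv hD))).const_mul c)
  have key : (fun ε : ℝ => Real.exp (b * Qf (x + ε • vp r i))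
        * (-(κ * (m ^ 2 * Wf (x + ε • vp r i) ^ 2 * (2 * (x + ε • vp r i).1 i)
              / (A + m * Qf (x + ε • vp r i)) ^ 2
            - m * (2 * Wf (x + ε • vp r i) * (x + ε • vp r i).2 i)
              / (A + m * Qf (x + ε • vp r i))))
          + c * ((x + ε • vp r i).1 i * (2 * Hf A m κ (x + ε • vp r i)))
          - c * ((x + ε • vp r i).2 i
              * (2 * κ * A * Wf (x + ε • vp r i) / (A + m * Qf (x + ε • vp r i))))))
      = fun ε => Real.exp (b * Qf x)
          * (-(κ * (m ^ 2 * (Wf x + ε * x.1 i) ^ 2 * (2 * x.1 i) / (A + m * Qf x) ^ 2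
              - m * (2 * (Wf x + ε * x.1 i) * (x.2 i + ε)) / (A + m * Qf x)))
            + c * (x.1 i * (2 * (κ * ((Pf x + ε * (2 * x.2 i) + ε ^ 2)
                - m * (Wf x + ε * x.1 i) ^ 2 / (A + m * Qf x)))))
            - c * ((x.2 i + ε)
                * (2 * κ * A * (Wf x + ε * x.1 i) / (A + m * Qf x)))) := by
    funext ε; unfold Hf
    rw [Pf_line_p, Wf_line_p, Qf_line_p, snd_line_p_i, fst_line_p]
  refine pd_eq (v := vp r i) hdiff ?_
  rw [key]
  have hw := hW_line (a := x.1 i) (W0 := Wf x)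
  have hpi := hsi_line (a := x.2 i)
  have t1 := (((hw.pow 2).const_mul (m ^ 2)).mul_const (2 * x.1 i)).div_const
    ((A + m * Qf x) ^ 2)
  have t2 := (((hw.const_mul 2).mul hpi).const_mul m).div_const (A + m * Qf x)
  have tHf := (((hQ_line (s2 := x.2 i) (Q0 := Pf x)).sub
    (((hw.pow 2).const_mul m).div_const (A + m * Qf x))).const_mul κ)
  have t3 := ((tHf.const_mul 2).const_mul (x.1 i)).const_mul c
  have t4 := (hpi.mul ((hw.const_mul (2 * κ * A)).div_const (A + m * Qf x))).const_mul c
  have h := ((((t1.sub t2).const_mul κ).neg.add t3).sub t4).const_mul (Real.exp (b * Qf x))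
  refine h.congr_deriv ?_
  norm_num
  field_simp
  ring

/-- sum collapse -/
lemma sum_canon (e α β γ : ℝ) (x : E r) :
    ∑ i, e * (α + β * (x.1 i * x.2 i) + γ * x.1 i ^ 2)
      = e * (α * (r : ℝ) + β * Wf x + γ * Qf x) := by
  rw [← Finset.mul_sum]
  congr 1
  rw [Finset.sum_add_distrib, Finset.sum_add_distrib, ← Finset.mul_sum, ← Finset.mul_sum,
    Finset.sum_const, Finset.card_univ, Fintype.card_fin, nsmul_eq_mul]
  unfold Wf Qf
  ring

lemma sumPG (hA : 0 < A) (hm : 0 ≤ m) (x : E r) :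
    ∑ j, x.2 j * pdp r (Hf A m κ) j x = 2 * Hf A m κ x := by
  have hD := (Dpos hA hm x).ne'
  have h : ∀ j, x.2 j * pdp r (Hf A m κ) j x
      = 2 * κ * x.2 j ^ 2 - (2 * κ * m * Wf x / (A + m * Qf x)) * (x.1 j * x.2 j) := by
    intro j; rw [pdp_Hf hA hm]; field_simp
  rw [Finset.sum_congr rfl fun j _ => h j, Finset.sum_sub_distrib, ← Finset.mul_sum,
    ← Finset.mul_sum]
  unfold Hf Pf Wf
  field_simp

lemma sumSG (hA : 0 < A) (hm : 0 ≤ m) (x : E r) :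
    ∑ j, x.1 j * pdp r (Hf A m κ) j x = 2 * κ * A * Wf x / (A + m * Qf x) := by
  have hD := (Dpos hA hm x).ne'
  have h : ∀ j, x.1 j * pdp r (Hf A m κ) j x
      = 2 * κ * (x.1 j * x.2 j) - (2 * κ * m * Wf x / (A + m * Qf x)) * x.1 j ^ 2 := by
    intro j; rw [pdp_Hf hA hm]; field_simp
  rw [Finset.sum_congr rfl fun j _ => h j, Finset.sum_sub_distrib, ← Finset.mul_sum,
    ← Finset.mul_sum]
  unfold Wf Qf
  field_simp
  ring

lemma Csum (hA : 0 < A) (hm : 0 ≤ m) (i : Fin r) (x : E r) :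
    ∑ j, ∑ k, (-c * (x.1 i * (if j = k then 1 else 0) - x.1 j * (if i = k then 1 else 0)))
        * x.2 k * pdp r (Hf A m κ) j x
      = -(c * (x.1 i * (2 * Hf A m κ x)))
          + c * (x.2 i * (2 * κ * A * Wf x / (A + m * Qf x))) := by
  have inner : ∀ j, ∑ k,
      (-c * (x.1 i * (if j = k then 1 else 0) - x.1 j * (if i = k then 1 else 0)))
        * x.2 k * pdp r (Hf A m κ) j x
      = (-c * x.1 i) * (x.2 j * pdp r (Hf A m κ) j x)
          + (c * x.2 i) * (x.1 j * pdp r (Hf A m κ) j x) := by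
    intro j
    have h : ∀ k, (-c * (x.1 i * (if j = k then 1 else 0) - x.1 j * (if i = k then 1 else 0)))
        * x.2 k * pdp r (Hf A m κ) j x
      = (if j = k then (-c * x.1 i) * (x.2 k * pdp r (Hf A m κ) j x) else 0)
          + (if i = k then (c * x.1 j) * (x.2 k * pdp r (Hf A m κ) j x) else 0) := by
      intro k
      rcases eq_or_ne j k with h1 | h1 <;> rcases eq_or_ne i k with h2 | h2 <;>
        simp [h1, h2] <;> ring
    rw [Finset.sum_congr rfl fun k _ => h k, Finset.sum_add_distrib]
    simp only [Finset.sum_ite_eq, Finset.mem_univ, if_true]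
    ring
  rw [Finset.sum_congr rfl fun j _ => inner j, Finset.sum_add_distrib, ← Finset.mul_sum,
    ← Finset.mul_sum, sumPG hA hm, sumSG hA hm]
  ring

lemma Pf_scale (u w : Fin r → ℝ) (e : ℝ) :
    Pf ((u, fun j => e * w j) : E r) = e ^ 2 * Pf ((u, w) : E r) := by
  unfold Pf
  rw [Finset.mul_sum]
  exact Finset.sum_congr rfl fun j _ => by ring

lemma Wf_scale (u w : Fin r → ℝ) (e : ℝ) :
    Wf ((u, fun j => e * w j) : E r) = e * Wf ((u, w) : E r) := by
  unfold Wf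
  rw [Finset.mul_sum]
  exact Finset.sum_congr rfl fun j _ => by ring

lemma Hf_scale (u w : Fin r → ℝ) (e : ℝ) :
    Hf A m κ ((u, fun j => e * w j) : E r) = e ^ 2 * Hf A m κ ((u, w) : E r) := by
  unfold Hf
  rw [Pf_scale, Wf_scale]
  have hq : Qf ((u, fun j => e * w j) : E r) = Qf ((u, w) : E r) := rfl
  rw [hq]
  ring
end Rub


set_option maxHeartbeats 2000000 in
/-- explicit Chaplygin Hamiltonisation of the multidimensional
rubber-rolling symmetric body.  With `r = n − 1`,
`c = m a / (R (J₁ + J_n + m a²))`, metric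
`K_{kl}(s) = (1/R²)((J₁+J_n+ma²) δ_{kl} + m s_k s_l)`, Hamiltonian
`H(s,p) = (1/2) Σ K^{ij}(s) p_i p_j`, and gyroscopic coefficients
`C_{ij}^k(s) = −c (s_i δ_j^k − s_j δ_i^k)`: any solution of the reduced equations,
reparametrised by `τ' = exp((c/2) Σ s_i²)` and `p̃ = exp((c/2) Σ s_i²) p`, solves
Hamilton's canonical equations for `H̃(s,p̃) = H(s, exp(−(c/2) Σ s_j²) p̃)`;
moreover the divergence of `exp(((n−2)c/2) Σ s_i²) X` vanishes identically. -/
theorem rubber_rolling_body_hamiltonisation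
    (n : ℕ) (hn : 3 ≤ n)
    (m R J₁ Jn a c : ℝ) (hm : 0 < m) (hR : 0 < R) (hJ₁ : 0 < J₁) (hJn : 0 < Jn)
    (hc : c = m * a / (R * (J₁ + Jn + m * a^2)))
    (K : (Fin (n-1) → ℝ) → Matrix (Fin (n-1)) (Fin (n-1)) ℝ)
    (hK : ∀ s k l, K s k l =
      (1/R^2) * ((J₁ + Jn + m * a^2) * (if k = l then 1 else 0) + m * s k * s l))
    (H : (Fin (n-1) → ℝ) × (Fin (n-1) → ℝ) → ℝ)
    (hH : ∀ x, H x = (1/2) * ∑ i, ∑ j, (K x.1)⁻¹ i j * x.2 i * x.2 j)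
    (C : Fin (n-1) → Fin (n-1) → Fin (n-1) → (Fin (n-1) → ℝ) → ℝ)
    (hC : ∀ i j k s, C i j k s =
      -c * (s i * (if j = k then 1 else 0) - s j * (if i = k then 1 else 0)))
    -- a solution `(s,p)` of the reduced equations on an open interval `I`:
    (aI bI : ℝ) (I : Set ℝ) (hI : I = Set.Ioo aI bI)
    (s p : ℝ → Fin (n-1) → ℝ)
    (hsol1 : ∀ t ∈ I, ∀ i,
      HasDerivAt (fun t' => s t' i) (pdp (n-1) H i (s t, p t)) t)
    (hsol2 : ∀ t ∈ I, ∀ i, HasDerivAt (fun t' => p t' i)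
      (- pdq (n-1) H i (s t, p t)
        - ∑ j, ∑ k, C i j k (s t) * p t k * pdp (n-1) H j (s t, p t)) t)
    -- the new time `τ` with `τ'(t) = exp((c/2) Σ_i s_i(t)²)`, and its inverse `tt`:
    (τ : ℝ → ℝ) (hτsmooth : ContDiffOn ℝ (⊤ : ℕ∞) τ I) (hτmono : StrictMonoOn τ I)
    (hτ' : ∀ t ∈ I, HasDerivAt τ (Real.exp ((c/2) * ∑ i, (s t i)^2)) t)
    (Jset : Set ℝ) (hJset : Jset = τ '' I)
    (tt : ℝ → ℝ) (htt : ∀ t ∈ I, tt (τ t) = t)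
    -- the reparametrised curves and the new Hamiltonian:
    (st pt : ℝ → Fin (n-1) → ℝ)
    (hst : ∀ u, st u = s (tt u))
    (hpt : ∀ u i, pt u i = Real.exp ((c/2) * ∑ j, (s (tt u) j)^2) * p (tt u) i)
    (Ht : (Fin (n-1) → ℝ) × (Fin (n-1) → ℝ) → ℝ)
    (hHt : ∀ x, Ht x = H (x.1, fun i => Real.exp (-(c/2) * ∑ j, (x.1 j)^2) * x.2 i))
    -- the vector field of the reduced equations:
    (X : (Fin (n-1) → ℝ) × (Fin (n-1) → ℝ) → (Fin (n-1) → ℝ) × (Fin (n-1) → ℝ))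
    (hX : ∀ x, X x =
      (fun i => pdp (n-1) H i x,
       fun i => - pdq (n-1) H i x
         - ∑ j, ∑ k, C i j k x.1 * x.2 k * pdp (n-1) H j x)) :
    (∀ u ∈ Jset, ∀ i,
      HasDerivAt (fun u' => st u' i) (pdp (n-1) Ht i (st u, pt u)) u ∧
      HasDerivAt (fun u' => pt u' i) (- pdq (n-1) Ht i (st u, pt u)) u) ∧
    (∀ x : (Fin (n-1) → ℝ) × (Fin (n-1) → ℝ),
      divg (n-1)
        (fun y => Real.exp ((((n : ℝ) - 2) * c / 2) * ∑ i, (y.1 i)^2) • X y) x = 0) := by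
  classical
  have hm' : (0:ℝ) ≤ m := hm.le
  set A : ℝ := J₁ + Jn + m * a ^ 2 with hAdef
  have hA : 0 < A := by rw [hAdef]; positivity
  set κ : ℝ := R ^ 2 / (2 * A) with hκdef
  -- Step 1: the inverse of K
  have hKinv : ∀ sv : Fin (n-1) → ℝ, (K sv)⁻¹
      = Matrix.of fun i j => (R ^ 2 / A) * ((if i = j then 1 else 0)
          - m * sv i * sv j / (A + m * ∑ k, (sv k) ^ 2)) := by
    intro sv
    have hDv : (0:ℝ) < A + m * ∑ k, (sv k) ^ 2 := by
      have : (0:ℝ) ≤ ∑ k, (sv k) ^ 2 := Finset.sum_nonneg fun k _ => sq_nonneg _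
      nlinarith
    apply Matrix.inv_eq_right_inv
    ext i j
    rw [Matrix.mul_apply]
    have hterm : ∀ k, K sv i k * Matrix.of (fun i' j' => (R ^ 2 / A) * ((if i' = j' then 1 else 0)
          - m * sv i' * sv j' / (A + m * ∑ k', (sv k') ^ 2))) k j
        = (1/A) * ((if i = k then A * ((if k = j then 1 else 0)
              - m * sv k * sv j / (A + m * ∑ k', (sv k') ^ 2)) else 0)
            + ((if k = j then m * sv i * sv k else 0)
            - m ^ 2 * sv i * sv k ^ 2 * sv j / (A + m * ∑ k', (sv k') ^ 2))) := by
      intro k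
      rw [hK]
      simp only [Matrix.of_apply]
      rcases eq_or_ne k j with rfl | h2
      · rcases eq_or_ne i k with rfl | h1
        · simp
          field_simp
          try ring
        · simp [h1]
          field_simp
          try ring
      · rcases eq_or_ne i k with rfl | h1
        · simp [h2]
          field_simp
          try ring
        · simp [h1, h2]
          field_simp
          try ring
    rw [Finset.sum_congr rfl fun k _ => hterm k, ← Finset.mul_sum, Finset.sum_add_distrib,
      Finset.sum_sub_distrib]
    simp only [Finset.sum_ite_eq, Finset.sum_ite_eq', Finset.mem_univ, if_true]
    have hpull : ∑ k, m ^ 2 * sv i * sv k ^ 2 * sv j / (A + m * ∑ k', (sv k') ^ 2)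
        = m ^ 2 * sv i * sv j * (∑ k, (sv k) ^ 2) / (A + m * ∑ k', (sv k') ^ 2) := by
      calc ∑ k, m ^ 2 * sv i * sv k ^ 2 * sv j / (A + m * ∑ k', (sv k') ^ 2)
          = ∑ k, (m ^ 2 * sv i * sv j / (A + m * ∑ k', (sv k') ^ 2)) * sv k ^ 2 :=
            Finset.sum_congr rfl fun k _ => by ring
        _ = _ := by rw [← Finset.mul_sum]; ring
    rw [hpull, Matrix.one_apply]
    rcases eq_or_ne i j with rfl | h
    · simp only [if_pos rfl]
      field_simp
      ring
    · simp only [if_neg h]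
      field_simp
      ring
  -- Step 2 : H is the explicit rational function Hf
  have hHfx : H = Rub.Hf A m κ := by
    funext x
    rw [hH x]
    have hDv : (0:ℝ) < A + m * ∑ k, (x.1 k) ^ 2 := by
      have : (0:ℝ) ≤ ∑ k, (x.1 k) ^ 2 := Finset.sum_nonneg fun k _ => sq_nonneg _
      nlinarith
    rw [hKinv x.1]
    simp only [Matrix.of_apply]
    have hij : ∀ i j : Fin (n-1), (R ^ 2 / A) * ((if i = j then 1 else 0)
          - m * x.1 i * x.1 j / (A + m * ∑ k, (x.1 k) ^ 2)) * x.2 i * x.2 j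
        = (if i = j then (R ^ 2 / A) * (x.2 i * x.2 j) else 0)
            - (R ^ 2 * m / A) * ((x.1 i * x.2 i) * (x.1 j * x.2 j))
              / (A + m * ∑ k, (x.1 k) ^ 2) := by
      intro i j
      rcases eq_or_ne i j with h | h <;> simp [h] <;> field_simp <;> ring
    have hrow : ∀ i, ∑ j, (R ^ 2 / A) * ((if i = j then 1 else 0)
          - m * x.1 i * x.1 j / (A + m * ∑ k, (x.1 k) ^ 2)) * x.2 i * x.2 j
        = (R ^ 2 / A) * (x.2 i * x.2 i)
            - (R ^ 2 * m / A) * ((x.1 i * x.2 i) * Rub.Wf x)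
              / (A + m * ∑ k, (x.1 k) ^ 2) := by
      intro i
      rw [Finset.sum_congr rfl fun j _ => hij i j, Finset.sum_sub_distrib]
      simp only [Finset.sum_ite_eq, Finset.mem_univ, if_true]
      congr 1
      calc ∑ j, (R ^ 2 * m / A) * ((x.1 i * x.2 i) * (x.1 j * x.2 j))
              / (A + m * ∑ k, (x.1 k) ^ 2)
          = ∑ j, ((R ^ 2 * m / A) * (x.1 i * x.2 i) / (A + m * ∑ k, (x.1 k) ^ 2))
              * (x.1 j * x.2 j) := Finset.sum_congr rfl fun j _ => by ring
        _ = _ := by rw [← Finset.mul_sum]; unfold Rub.Wf; ring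
    rw [Finset.sum_congr rfl fun i _ => hrow i, Finset.sum_sub_distrib]
    have h1 : ∑ i, (R ^ 2 / A) * (x.2 i * x.2 i) = (R ^ 2 / A) * Rub.Pf x := by
      unfold Rub.Pf; rw [Finset.mul_sum]; exact Finset.sum_congr rfl fun i _ => by ring
    have h2 : ∑ i, (R ^ 2 * m / A) * ((x.1 i * x.2 i) * Rub.Wf x)
          / (A + m * ∑ k, (x.1 k) ^ 2)
        = (R ^ 2 * m / A) * (Rub.Wf x * Rub.Wf x) / (A + m * ∑ k, (x.1 k) ^ 2) := by
      calc ∑ i, (R ^ 2 * m / A) * ((x.1 i * x.2 i) * Rub.Wf x)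
              / (A + m * ∑ k, (x.1 k) ^ 2)
          = ∑ i, ((R ^ 2 * m / A) * Rub.Wf x / (A + m * ∑ k, (x.1 k) ^ 2))
              * (x.1 i * x.2 i) := Finset.sum_congr rfl fun i _ => by ring
        _ = _ := by rw [← Finset.mul_sum]; unfold Rub.Wf; ring
    rw [h1, h2]
    unfold Rub.Hf Rub.Qf
    rw [hκdef]
    field_simp
  subst hHfx
  -- Step 3 : the new Hamiltonian
  have hHt2 : Ht = fun x => Real.exp (-c * Rub.Qf x) * Rub.Hf A m κ x := by
    funext x
    rw [hHt x, Rub.Hf_scale]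
    have h3 : Real.exp (-(c/2) * ∑ j, (x.1 j)^2) ^ 2 = Real.exp (-c * Rub.Qf x) := by
      rw [sq, ← Real.exp_add]; congr 1; unfold Rub.Qf; ring
    rw [h3, Prod.mk.eta]
  subst hHt2
  constructor
  · -- Part 1 : Hamiltonisation
    intro u hu i
    rw [hJset] at hu
    obtain ⟨t₀, ht₀, rfl⟩ := hu
    have ht₀' : aI < t₀ ∧ t₀ < bI := by rw [hI] at ht₀; exact ⟨ht₀.1, ht₀.2⟩
    set q0 : ℝ := ∑ j, (s t₀ j)^2 with hq0
    set ef : ℝ := Real.exp ((c/2) * q0) with hef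
    have hef0 : ef ≠ 0 := Real.exp_ne_zero _
    have hq0nn : (0:ℝ) ≤ q0 := by
      rw [hq0]; exact Finset.sum_nonneg fun j _ => sq_nonneg _
    have hD0 : (0:ℝ) < A + m * q0 := by nlinarith
    have key : ∀ ε > 0, ∃ δ > 0, ∀ y, |y - τ t₀| < δ →
        tt y ∈ I ∧ |tt y - t₀| < ε ∧ τ (tt y) = y := by
      intro ε hε
      set ε' : ℝ := min (ε/2) (min ((t₀ - aI)/2) ((bI - t₀)/2)) with hε'
      have hε'pos : 0 < ε' := by
        refine lt_min (by linarith) (lt_min (by linarith [ht₀'.1]) (by linarith [ht₀'.2]))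
      have hε'le : ε' ≤ ε / 2 := min_le_left _ _
      have hε'a : ε' ≤ (t₀ - aI)/2 := le_trans (min_le_right _ _) (min_le_left _ _)
      have hε'b : ε' ≤ (bI - t₀)/2 := le_trans (min_le_right _ _) (min_le_right _ _)
      have hIcc : Set.Icc (t₀ - ε') (t₀ + ε') ⊆ I := by
        rw [hI]; intro z hz
        exact ⟨by linarith [hz.1, ht₀'.1], by linarith [hz.2, ht₀'.2]⟩
      have hIoo : Set.Ioo (t₀ - ε') (t₀ + ε') ⊆ I :=
        Set.Ioo_subset_Icc_self.trans hIcc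
      have hma : t₀ - ε' ∈ I := hIcc ⟨le_refl _, by linarith⟩
      have hmb : t₀ + ε' ∈ I := hIcc ⟨by linarith, le_refl _⟩
      have hcontIcc : ContinuousOn τ (Set.Icc (t₀ - ε') (t₀ + ε')) :=
        hτsmooth.continuousOn.mono hIcc
      have hsur := intermediate_value_Ioo (by linarith : t₀ - ε' ≤ t₀ + ε') hcontIcc
      have hlt1 : τ (t₀ - ε') < τ t₀ := hτmono hma ht₀ (by linarith)
      have hlt2 : τ t₀ < τ (t₀ + ε') := hτmono ht₀ hmb (by linarith)
      refine ⟨min (τ t₀ - τ (t₀ - ε')) (τ (t₀ + ε') - τ t₀),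
        lt_min (by linarith) (by linarith), ?_⟩
      intro y hy
      have hy' := abs_lt.mp hy
      have hy1 : τ (t₀ - ε') < y := by
        have := min_le_left (τ t₀ - τ (t₀ - ε')) (τ (t₀ + ε') - τ t₀); linarith [hy'.1]
      have hy2 : y < τ (t₀ + ε') := by
        have := min_le_right (τ t₀ - τ (t₀ - ε')) (τ (t₀ + ε') - τ t₀); linarith [hy'.2]
      obtain ⟨z, hz, hzy⟩ := hsur ⟨hy1, hy2⟩
      have hzI : z ∈ I := hIoo hz
      have hzz : tt y = z := by rw [← hzy, htt z hzI]
      refine ⟨hzz ▸ hzI, ?_, by rw [hzz, hzy]⟩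
      rw [hzz, abs_lt]
      exact ⟨by linarith [hz.1], by linarith [hz.2]⟩
    have httu : tt (τ t₀) = t₀ := htt t₀ ht₀
    have hcont : ContinuousAt tt (τ t₀) := by
      rw [Metric.continuousAt_iff]
      intro ε hε
      obtain ⟨δ, hδ, hkey⟩ := key ε hε
      refine ⟨δ, hδ, ?_⟩
      intro y hy
      rw [Real.dist_eq] at hy ⊢
      rw [httu]
      exact (hkey y hy).2.1
    have hright : ∀ᶠ y in nhds (τ t₀), τ (tt y) = y := by
      obtain ⟨δ, hδ, hkey⟩ := key 1 one_pos
      refine Metric.eventually_nhds_iff.mpr ⟨δ, hδ, ?_⟩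
      intro y hy
      rw [Real.dist_eq] at hy
      exact (hkey y hy).2.2
    have hτ't₀ : HasDerivAt τ ef (tt (τ t₀)) := by
      rw [httu, hef, hq0]; exact hτ' t₀ ht₀
    have httd : HasDerivAt tt ef⁻¹ (τ t₀) :=
      HasDerivAt.of_local_left_inverse hcont hτ't₀ hef0 hright
    have hstu : st (τ t₀) = s t₀ := by rw [hst, httu]
    have hptu : pt (τ t₀) = fun j => ef * p t₀ j := by
      funext j; rw [hpt, httu, hef, hq0]
    have hqpair : Rub.Qf ((s t₀, fun j => ef * p t₀ j) : Rub.E (n-1)) = q0 := by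
      rw [hq0]; rfl
    have hq2 : Rub.Qf ((s t₀, p t₀) : Rub.E (n-1)) = q0 := by rw [hq0]; rfl
    have hwpair : Rub.Wf ((s t₀, fun j => ef * p t₀ j) : Rub.E (n-1))
        = ef * Rub.Wf ((s t₀, p t₀) : Rub.E (n-1)) := Rub.Wf_scale _ _ _
    have hexpc : Real.exp (-c * q0) = ef⁻¹ * ef⁻¹ := by
      rw [show -c * q0 = -((c/2) * q0) + -((c/2) * q0) by ring, Real.exp_add,
        Real.exp_neg, ← hef]
    constructor
    · -- ds̃/du
      have hs' : HasDerivAt (fun t' => s t' i)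
          (pdp (n-1) (Rub.Hf A m κ) i (s t₀, p t₀)) (tt (τ t₀)) := by
        rw [httu]; exact hsol1 t₀ ht₀ i
      have h1 := hs'.comp (τ t₀) httd
      have hfun : (fun u' => st u' i) = (fun t' => s t' i) ∘ tt := by
        funext u'; simp only [Function.comp]; rw [hst]
      rw [hfun]
      have hval : pdp (n-1) (fun x => Real.exp (-c * Rub.Qf x) * Rub.Hf A m κ x) i
          (st (τ t₀), pt (τ t₀))
          = pdp (n-1) (Rub.Hf A m κ) i (s t₀, p t₀) * ef⁻¹ := by
        rw [hstu, hptu, Rub.pdp_expHf hA hm', Rub.pdp_Hf hA hm']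
        rw [hqpair, hwpair]
        dsimp only
        rw [hq2, hexpc]
        field_simp
      rw [hval]
      exact h1
    · -- dp̃/du
      have hd_sum : HasDerivAt (fun t' => ∑ j, (s t' j)^2)
          (∑ j, 2 * s t₀ j * pdp (n-1) (Rub.Hf A m κ) j (s t₀, p t₀)) t₀ := by
        refine HasDerivAt.fun_sum fun j _ => ?_
        have := (hsol1 t₀ ht₀ j).fun_pow 2
        simpa using this
      have hde : HasDerivAt (fun t' => Real.exp ((c/2) * ∑ j, (s t' j)^2))
          (ef * ((c/2) * ∑ j, 2 * s t₀ j * pdp (n-1) (Rub.Hf A m κ) j (s t₀, p t₀))) t₀ := by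
        have h' := (hd_sum.const_mul (c/2)).exp
        rw [← hq0, ← hef] at h'
        exact h'
      have hmul := hde.mul (hsol2 t₀ ht₀ i)
      have hmul' : HasDerivAt (fun t' => Real.exp ((c/2) * ∑ j, (s t' j)^2) * p t' i)
          (ef * ((c/2) * ∑ j, 2 * s t₀ j * pdp (n-1) (Rub.Hf A m κ) j (s t₀, p t₀))
              * p t₀ i
            + Real.exp ((c/2) * ∑ j, (s t₀ j)^2)
              * (- pdq (n-1) (Rub.Hf A m κ) i (s t₀, p t₀)
                - ∑ j, ∑ k, C i j k (s t₀) * p t₀ k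
                    * pdp (n-1) (Rub.Hf A m κ) j (s t₀, p t₀))) (tt (τ t₀)) := by
        rw [httu]; exact hmul
      have hcomp := hmul'.comp (τ t₀) httd
      have hfun : (fun u' => pt u' i)
          = (fun t' => Real.exp ((c/2) * ∑ j, (s t' j)^2) * p t' i) ∘ tt := by
        funext u'; simp only [Function.comp]; rw [hpt]
      rw [hfun]
      refine hcomp.congr_deriv ?_
      -- value identity
      have hCs : ∑ j, ∑ k, C i j k (s t₀) * p t₀ k
            * pdp (n-1) (Rub.Hf A m κ) j (s t₀, p t₀)
          = -(c * (s t₀ i * (2 * Rub.Hf A m κ ((s t₀, p t₀) : Rub.E (n-1)))))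
              + c * (p t₀ i * (2 * κ * A * Rub.Wf ((s t₀, p t₀) : Rub.E (n-1))
                  / (A + m * Rub.Qf ((s t₀, p t₀) : Rub.E (n-1))))) := by
        simp only [hC]
        exact Rub.Csum hA hm' i ((s t₀, p t₀) : Rub.E (n-1))
      have hS : ∑ j, s t₀ j * pdp (n-1) (Rub.Hf A m κ) j (s t₀, p t₀)
          = 2 * κ * A * Rub.Wf ((s t₀, p t₀) : Rub.E (n-1))
              / (A + m * Rub.Qf ((s t₀, p t₀) : Rub.E (n-1))) :=
        Rub.sumSG hA hm' ((s t₀, p t₀) : Rub.E (n-1))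
      have hS2 : ∑ j, 2 * s t₀ j * pdp (n-1) (Rub.Hf A m κ) j (s t₀, p t₀)
          = 2 * (2 * κ * A * Rub.Wf ((s t₀, p t₀) : Rub.E (n-1))
              / (A + m * Rub.Qf ((s t₀, p t₀) : Rub.E (n-1)))) := by
        rw [← hS, Finset.mul_sum]
        exact Finset.sum_congr rfl fun j _ => by ring
      rw [hstu, hptu, Rub.pdq_expHf hA hm', hqpair, hwpair, Rub.Hf_scale,
        Rub.pdq_Hf hA hm', hS2, hCs, ← hq0, ← hef]
      dsimp only
      rw [hq2, hexpc]
      field_simp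
      ring
  · -- Part 2 : invariant measure
    intro x
    have hDx : (0:ℝ) < A + m * Rub.Qf x := Rub.Dpos hA hm' x
    have e1 : ∀ i : Fin (n-1),
        (fun y : Rub.E (n-1) =>
            (Real.exp ((((n : ℝ) - 2) * c / 2) * ∑ i', (y.1 i')^2) • X y).1 i)
        = fun y => Real.exp ((((n : ℝ) - 2) * c / 2) * Rub.Qf y)
            * (κ * (2 * y.2 i - m * (2 * Rub.Wf y * y.1 i) / (A + m * Rub.Qf y))) := by
      intro i; funext y
      rw [hX y]
      simp only [Prod.smul_mk, Pi.smul_apply, smul_eq_mul]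
      rw [Rub.pdp_Hf hA hm' i y]
      rfl
    have e2 : ∀ i : Fin (n-1),
        (fun y : Rub.E (n-1) =>
            (Real.exp ((((n : ℝ) - 2) * c / 2) * ∑ i', (y.1 i')^2) • X y).2 i)
        = fun y => Real.exp ((((n : ℝ) - 2) * c / 2) * Rub.Qf y)
            * (-(κ * (m ^ 2 * Rub.Wf y ^ 2 * (2 * y.1 i) / (A + m * Rub.Qf y) ^ 2
                  - m * (2 * Rub.Wf y * y.2 i) / (A + m * Rub.Qf y)))
                + c * (y.1 i * (2 * Rub.Hf A m κ y))
                - c * (y.2 i * (2 * κ * A * Rub.Wf y / (A + m * Rub.Qf y)))) := by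
      intro i; funext y
      rw [hX y]
      simp only [Prod.smul_mk, Pi.smul_apply, smul_eq_mul]
      have hCs : ∑ j, ∑ k, C i j k y.1 * y.2 k * pdp (n-1) (Rub.Hf A m κ) j y
          = -(c * (y.1 i * (2 * Rub.Hf A m κ y)))
              + c * (y.2 i * (2 * κ * A * Rub.Wf y / (A + m * Rub.Qf y))) := by
        simp only [hC]
        exact Rub.Csum hA hm' i y
      rw [hCs, Rub.pdq_Hf hA hm' i y]
      have hqq : ∑ i', (y.1 i')^2 = Rub.Qf y := rfl
      rw [hqq]
      ring
    have h5 : ∀ i : Fin (n-1),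
        pdq (n-1) (fun y : Rub.E (n-1) =>
            (Real.exp ((((n : ℝ) - 2) * c / 2) * ∑ i', (y.1 i')^2) • X y).1 i) i x
        = Real.exp ((((n : ℝ) - 2) * c / 2) * Rub.Qf x)
            * ((-(2 * m * κ * Rub.Wf x) / (A + m * Rub.Qf x))
              + (4 * (((n : ℝ) - 2) * c / 2) * κ - 2 * m * κ / (A + m * Rub.Qf x))
                  * (x.1 i * x.2 i)
              + (-(4 * (((n : ℝ) - 2) * c / 2) * κ * m * Rub.Wf x) / (A + m * Rub.Qf x)
                  + 4 * m ^ 2 * κ * Rub.Wf x / (A + m * Rub.Qf x) ^ 2) * x.1 i ^ 2) := by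
      intro i
      rw [e1 i]
      exact Rub.pdq_field1 hA hm' i x
    have h6 : ∀ i : Fin (n-1),
        pdp (n-1) (fun y : Rub.E (n-1) =>
            (Real.exp ((((n : ℝ) - 2) * c / 2) * ∑ i', (y.1 i')^2) • X y).2 i) i x
        = Real.exp ((((n : ℝ) - 2) * c / 2) * Rub.Qf x)
            * ((2 * m * κ * Rub.Wf x / (A + m * Rub.Qf x)
                  - 2 * c * κ * A * Rub.Wf x / (A + m * Rub.Qf x))
              + (2 * m * κ / (A + m * Rub.Qf x) + 4 * c * κ
                  - 2 * c * κ * A / (A + m * Rub.Qf x)) * (x.1 i * x.2 i)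
              + (-(4 * m ^ 2 * κ * Rub.Wf x) / (A + m * Rub.Qf x) ^ 2
                  - 4 * c * κ * m * Rub.Wf x / (A + m * Rub.Qf x)) * x.1 i ^ 2) := by
      intro i
      rw [e2 i]
      exact Rub.pdp_field2 hA hm' i x
    simp only [divg]
    rw [Finset.sum_congr rfl fun i _ => h5 i, Finset.sum_congr rfl fun i _ => h6 i,
      Rub.sum_canon, Rub.sum_canon]
    have hcast : ((n - 1 : ℕ) : ℝ) = (n : ℝ) - 1 := by
      rw [Nat.cast_sub (by omega : 1 ≤ n), Nat.cast_one]
    rw [hcast, ← mul_add]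
    apply mul_eq_zero_of_right
    field_simp
    ring
end
end
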